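/- arXiv:1505.04731 — 6 statements merged into one kernel-verified Lean document; each statement's English description precedes it below -/
import Mathlib

section
/- Let λ ∈ ℂ with |λ| < 1 and define T₀ on entire functions by T₀ f(z) = f'(λz). Then for every entire function f, the sequence (T₀)ⁿ f(0) tends to 0 as n → ∞. In particular |(T₀)ⁿ f (0)| ≤ |λ|^(n(n-1)/2) · n! · sup_{|z| ≤ 1} |f(z)| for all n. -/
/-! By the chain rule, `T₀ⁿ f (w) = λ^(0 + 1 + ⋯ + (n-1)) f⁽ⁿ⁾(λⁿ w)`, so at `w = 0` the Cauchy
estimate on the unit disc gives `|T₀ⁿ f (0)| ≤ |λ|^(n(n-1)/2) n! M`. The right-hand side `aₙ`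
satisfies `aₙ₊₁ = (n+1) |λ|ⁿ aₙ` with `(n+1) |λ|ⁿ → 0`, so it is summable by the ratio test and
tends to zero. -/

open Filter Finset Metric Topology

section DilatedDeriv

variable {𝕜 E : Type*} [NontriviallyNormedField 𝕜] [NormedAddCommGroup E] [NormedSpace 𝕜 E]

noncomputable def dilatedDeriv (l : 𝕜) (g : 𝕜 → E) : 𝕜 → E := fun w => deriv g (l * w)

theorem dilatedDeriv_iterate (l : 𝕜) (f : 𝕜 → E) (n : ℕ) :
    (dilatedDeriv l)^[n] f = fun w => l ^ (∑ i ∈ range n, i) • iteratedDeriv n f (l ^ n * w) := by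
  induction n with
  | zero => simp
  | succ n ih =>
    funext w
    rw [Function.iterate_succ_apply', ih, dilatedDeriv]
    simp only [deriv_fun_const_smul_field, deriv_comp_mul_left (l ^ n) (iteratedDeriv n f),
      ← iteratedDeriv_succ, smul_smul, sum_range_succ, pow_add, pow_succ, mul_assoc]

end DilatedDeriv

theorem Complex.norm_iteratedDeriv_le_factorial_mul_sSup_div_pow {F : Type*}
    [NormedAddCommGroup F] [NormedSpace ℂ F] [CompleteSpace F] {f : ℂ → F}
    (hf : Differentiable ℂ f) (c : ℂ) {R : ℝ} (hR : 0 < R) (n : ℕ) :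
    ‖iteratedDeriv n f c‖ ≤ n.factorial * sSup ((‖f ·‖) '' closedBall c R) / R ^ n := by
  have hbdd : BddAbove ((‖f ·‖) '' closedBall c R) :=
    (isCompact_closedBall c R).bddAbove_image hf.continuous.norm.continuousOn
  exact Complex.norm_iteratedDeriv_le_of_forall_mem_sphere_norm_le n hR hf.diffContOnCl
    fun z hz => le_csSup hbdd ⟨z, sphere_subset_closedBall hz, rfl⟩

theorem tendsto_pow_sum_range_mul_factorial {r : ℝ} (hr₀ : 0 ≤ r) (hr₁ : r < 1) :
    Tendsto (fun n => r ^ (∑ i ∈ range n, i) * n.factorial) atTop (𝓝 0) := by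
  set a : ℕ → ℝ := fun n => r ^ (∑ i ∈ range n, i) * n.factorial
  have ha_succ : ∀ n, a (n + 1) = ((n + 1) * r ^ n) * a n := fun n => by
    simp only [a, sum_range_succ, pow_add, Nat.factorial_succ]
    push_cast
    ring
  have hratio : Tendsto (fun n : ℕ => (n + 1) * r ^ n) atTop (𝓝 0) := by
    simpa [add_mul] using (tendsto_self_mul_const_pow_of_lt_one hr₀ hr₁).add
      (tendsto_pow_atTop_nhds_zero_of_lt_one hr₀ hr₁)
  refine Summable.tendsto_atTop_zero (summable_of_ratio_norm_eventually_le one_half_lt_one ?_)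
  filter_upwards [hratio.eventually (gt_mem_nhds one_half_pos)] with n hn
  rw [ha_succ, norm_mul, Real.norm_of_nonneg (by positivity)]
  gcongr

theorem stmt_2 (l : ℂ) (hl : ‖l‖ < 1) (f : ℂ → ℂ) (hf : Differentiable ℂ f) :
    Filter.Tendsto (fun n : ℕ => (fun g : ℂ → ℂ => fun w => deriv g (l * w))^[n] f 0)
      Filter.atTop (nhds 0) ∧
    ∀ n : ℕ, ‖(fun g : ℂ → ℂ => fun w => deriv g (l * w))^[n] f 0‖
      ≤ ‖l‖ ^ (n * (n - 1) / 2) * n.factorial *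
        sSup ((fun z => ‖f z‖) '' Metric.closedBall (0 : ℂ) 1) := by
  change Tendsto (fun n => (dilatedDeriv l)^[n] f 0) atTop (𝓝 0) ∧
    ∀ n : ℕ, ‖(dilatedDeriv l)^[n] f 0‖ ≤ _
  set M := sSup ((fun z => ‖f z‖) '' closedBall (0 : ℂ) 1)
  have hbound : ∀ n : ℕ,
      ‖(dilatedDeriv l)^[n] f 0‖ ≤ ‖l‖ ^ (∑ i ∈ range n, i) * n.factorial * M := by
    intro n
    simp only [dilatedDeriv_iterate, mul_zero, norm_smul, norm_pow, mul_assoc]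
    gcongr
    simpa using Complex.norm_iteratedDeriv_le_factorial_mul_sSup_div_pow hf 0 one_pos n
  refine ⟨squeeze_zero_norm hbound ?_, fun n => by simpa [sum_range_id] using hbound n⟩
  simpa using (tendsto_pow_sum_range_mul_factorial (norm_nonneg l) hl).mul_const M
end

section
/- Let λ ∈ ℂ with |λ| < 1. The operator T₀ on H(ℂ) given by T₀ f(z) = f'(λz) is not hypercyclic: there is no entire function f whose orbit {f, T₀f, T₀²f, ...} is dense in H(ℂ) with the topology of uniform convergence on compact sets. -/
open Filter Topology
open scoped NNReal ENNReal

lemma iter_formula (l : ℂ) {f : ℂ → ℂ} (hf : Differentiable ℂ f) (n : ℕ) :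
    (fun h : ℂ → ℂ => fun w => deriv h (l * w))^[n] f
      = fun z => l ^ (n*(n-1)/2) * iteratedDeriv n f (l^n * z) := by
  induction n with
  | zero => simp
  | succ n ih =>
    have hg : Differentiable ℂ (iteratedDeriv n f) := by
      have h : ContDiff ℂ ((n+1 : ℕ) : WithTop ℕ∞) f := hf.contDiff
      exact h.differentiable_iteratedDeriv n (by exact_mod_cast Nat.lt_succ_self n)
    rw [Function.iterate_succ_apply', ih]
    funext z
    have hinner : HasDerivAt (fun w : ℂ => l^n * w) (l^n) (l*z) :=
      ((hasDerivAt_id (l*z)).const_mul (l^n)).congr_deriv (mul_one _)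
    have hd : HasDerivAt (fun w : ℂ => l ^ (n*(n-1)/2) * iteratedDeriv n f (l^n * w))
        (l ^ (n*(n-1)/2) * (deriv (iteratedDeriv n f) (l^n * (l * z)) * l^n)) (l * z) :=
      (((hg.differentiableAt).hasDerivAt.comp (l*z) hinner)).const_mul _
    simp only [hd.deriv]
    rw [← iteratedDeriv_succ]
    have e1 : (n+1)*((n+1)-1)/2 = n*(n-1)/2 + n := by
      rcases n with _ | m
      · simp
      · have h' : (m+1+1)*((m+1+1)-1) = (m+1)*((m+1)-1) + 2*(m+1) := by
          simp only [Nat.add_sub_cancel]; ring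
        rw [h', Nat.add_mul_div_left _ _ (by norm_num : 0 < 2)]
    have e2 : l^n * (l * z) = l^(n+1) * z := by ring
    rw [e1, e2, pow_add]
    ring

lemma aux_tendsto {r : ℝ} (h0 : 0 ≤ r) (h1 : r < 1) :
    Tendsto (fun n : ℕ => r ^ (n*(n-1)/2) * (n.factorial : ℝ)) atTop (nhds 0) := by
  set u : ℕ → ℝ := fun n => r ^ (n*(n-1)/2) * (n.factorial : ℝ) with hu
  have hupos : ∀ n, 0 ≤ u n := fun n =>
    mul_nonneg (pow_nonneg h0 _) (by positivity)
  -- ratio : u (n+1) = u n * ((n+1) * r^n)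
  have hrat : ∀ n : ℕ, u (n+1) = u n * ((n+1 : ℝ) * r ^ n) := by
    intro n
    have e1 : (n+1)*((n+1)-1)/2 = n*(n-1)/2 + n := by
      rcases n with _ | m
      · simp
      · have h' : (m+1+1)*((m+1+1)-1) = (m+1)*((m+1)-1) + 2*(m+1) := by
          simp only [Nat.add_sub_cancel]; ring
        rw [h', Nat.add_mul_div_left _ _ (by norm_num : 0 < 2)]
    simp only [hu, e1, pow_add, Nat.factorial_succ]
    push_cast
    ring
  -- (n+1) * r^n tends to 0
  have hw : Tendsto (fun n : ℕ => (n+1 : ℝ) * r ^ n) atTop (nhds 0) := by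
    have h1' : ‖r‖ < 1 := by rwa [Real.norm_eq_abs, abs_of_nonneg h0]
    have hs := (summable_pow_mul_geometric_of_norm_lt_one 1 h1' (R := ℝ)).tendsto_atTop_zero
    have hs2 := tendsto_pow_atTop_nhds_zero_of_lt_one h0 h1
    have := hs.add hs2
    simp only [pow_one, add_zero] at this
    convert this using 2 with n
    ring
  obtain ⟨N, hN⟩ := (hw.eventually (eventually_le_nhds (by norm_num : (0:ℝ) < 1/2))).exists_forall_of_atTop
  -- u (N+k) ≤ u N * (1/2)^k
  have hbound : ∀ k, u (N + k) ≤ u N * (1/2) ^ k := by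
    intro k
    induction k with
    | zero => simp
    | succ k ih =>
      have := hrat (N + k)
      rw [show N + (k+1) = (N+k)+1 by ring, this]
      calc u (N+k) * (((N+k : ℕ)+1 : ℝ) * r ^ (N+k)) ≤ (u N * (1/2)^k) * (1/2) := by
            apply mul_le_mul ih (by exact_mod_cast hN (N+k) (by omega)) _ _
            · positivity
            · exact mul_nonneg (hupos N) (by positivity)
        _ = u N * (1/2)^(k+1) := by ring
  -- conclude
  have htail : Tendsto (fun k => u (N + k)) atTop (nhds 0) := by
    apply squeeze_zero (fun k => hupos _) hbound
    simpa using (tendsto_pow_atTop_nhds_zero_of_lt_one (by norm_num) (by norm_num : (1/2:ℝ) < 1)).const_mul (u N)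
  rw [← tendsto_add_atTop_iff_nat N]
  simpa [Nat.add_comm] using htail

-- Cauchy-type coefficient bound: |f⁽ⁿ⁾(0)| ≤ n! * C for an entire f
lemma deriv_bound {f : ℂ → ℂ} (hf : Differentiable ℂ f) :
    ∃ C > 0, ∀ n : ℕ, ‖iteratedDeriv n f 0‖ ≤ (n.factorial : ℝ) * C := by
  have h2 := hf.hasFPowerSeriesOnBall 0 (R := 1) one_pos
  set p := cauchyPowerSeries f 0 (1:ℝ≥0) with hp
  have hrad : ((1:ℝ≥0) : ℝ≥0∞) < p.radius := by
    rw [top_le_iff.mp h2.r_le]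
    exact ENNReal.coe_lt_top
  obtain ⟨C, hC0, hC⟩ := p.norm_mul_pow_le_of_lt_radius hrad
  refine ⟨C, hC0, fun n => ?_⟩
  have hfs := h2.factorial_smul (1 : ℂ) n
  have : iteratedDeriv n f 0 = (n.factorial : ℂ) * p n (fun _ => 1) := by
    rw [iteratedDeriv_eq_iteratedFDeriv, ← hfs, nsmul_eq_mul]
  rw [this, norm_mul, Complex.norm_natCast]
  have h3 : ‖p n fun _ => 1‖ ≤ ‖p n‖ := by
    have := (p n).le_opNorm (fun _ => 1)
    simp only [norm_one, Finset.prod_const_one, mul_one] at this; exact this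
  have h4 : ‖p n‖ ≤ C := by simpa using hC n
  have := h3.trans h4
  exact mul_le_mul_of_nonneg_left this (by positivity)

/-- For |λ| < 1 the operator T₀ f z = f'(λz) has no entire function with dense orbit
in the topology of uniform convergence on compact sets. -/
theorem stmt_3 (l : ℂ) (hl : ‖l‖ < 1) :
    ¬ ∃ f : ℂ → ℂ, Differentiable ℂ f ∧
      ∀ g : ℂ → ℂ, Differentiable ℂ g → ∀ K : Set ℂ, IsCompact K → ∀ ε > 0,
        ∃ n : ℕ, ∀ z ∈ K,
          ‖(fun h : ℂ → ℂ => fun w => deriv h (l * w))^[n] f z - g z‖ < ε := by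
  rintro ⟨f, hf, hdense⟩
  set T : (ℂ → ℂ) → (ℂ → ℂ) := fun h : ℂ → ℂ => fun w => deriv h (l * w) with hT
  -- orbit values at 0 are eventually small
  obtain ⟨C, hC0, hC⟩ := deriv_bound hf
  have habs : ∀ n : ℕ, ‖T^[n] f 0‖
      ≤ ‖l‖ ^ (n*(n-1)/2) * (n.factorial : ℝ) * C := by
    intro n
    have := congrFun (iter_formula l hf n) 0
    rw [hT, this]
    simp only [mul_zero]
    rw [norm_mul, norm_pow]
    calc ‖l‖ ^ (n*(n-1)/2) * ‖iteratedDeriv n f 0‖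
        ≤ ‖l‖ ^ (n*(n-1)/2) * ((n.factorial : ℝ) * C) :=
          mul_le_mul_of_nonneg_left (hC n) (by positivity)
      _ = ‖l‖ ^ (n*(n-1)/2) * (n.factorial : ℝ) * C := by ring
  have hlim : Filter.Tendsto (fun n : ℕ => ‖l‖ ^ (n*(n-1)/2) * (n.factorial : ℝ) * C)
      atTop (nhds 0) := by
    simpa using (aux_tendsto (norm_nonneg l) hl).mul_const C
  obtain ⟨N, hN⟩ := (hlim.eventually
    (eventually_le_nhds (by norm_num : (0:ℝ) < 1))).exists_forall_of_atTop
  have hsmall : ∀ n ≥ N, ‖T^[n] f 0‖ ≤ 1 :=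
    fun n hn => (habs n).trans (hN n hn)
  -- the target constant
  set M : ℝ := ∑ k ∈ Finset.range N, ‖T^[k] f 0‖ with hM
  have hM0 : 0 ≤ M := Finset.sum_nonneg fun _ _ => norm_nonneg _
  have hMle : ∀ n < N, ‖T^[n] f 0‖ ≤ M := fun n hn =>
    Finset.single_le_sum (f := fun k => ‖T^[k] f 0‖)
      (fun k _ => norm_nonneg _) (Finset.mem_range.mpr hn)
  obtain ⟨n, hn⟩ := hdense (fun _ => ((M + 2 : ℝ) : ℂ)) (differentiable_const _)
    {0} isCompact_singleton (1/2) (by norm_num)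
  have h0 := hn 0 rfl
  have hle : ‖T^[n] f 0‖ ≤ M + 1 := by
    rcases lt_or_ge n N with h | h
    · exact (hMle n h).trans (by linarith)
    · exact (hsmall n h).trans (by linarith)
  have hc : ‖((M + 2 : ℝ) : ℂ)‖ = M + 2 := by
    rw [Complex.norm_real, Real.norm_of_nonneg (by linarith)]
  have : (1 : ℝ) ≤ ‖T^[n] f 0 - ((M + 2 : ℝ) : ℂ)‖ := by
    have htri := norm_add_le (((M+2:ℝ):ℂ) - T^[n] f 0) (T^[n] f 0)
    rw [sub_add_cancel] at htri
    have h2 : ‖((M+2:ℝ):ℂ) - T^[n] f 0‖ = ‖T^[n] f 0 - ((M+2:ℝ):ℂ)‖ :=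
      norm_sub_rev _ _
    rw [hc, h2] at htri
    linarith
  rw [hT] at this
  linarith [h0, this]
end

section
/- Let φ : ℂᴺ → ℂᴺ be the diagonal affine map φ(z) = (λ₁z₁ + b₁, ..., λ_N z_N + b_N) with all λᵢ ≠ 0. Then φ is runaway (for every compact K ⊆ ℂᴺ there exists n with φⁿ(K) ∩ K = ∅) if and only if there exists some index i with λᵢ = 1 and bᵢ ≠ 0. -/
/-!
If no coordinate of φ is a nontrivial translation, φ has a fixed point (zᵢ = bᵢ / (1 - λᵢ) where
λᵢ ≠ 1, and zᵢ = 0 elsewhere), and a fixed point is a compact set that never leaves itself.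
Conversely, if λᵢ = 1 and bᵢ ≠ 0, the i-th coordinate increases by bᵢ at each step, so after
n steps it has moved by n‖bᵢ‖, which eventually exceeds the diameter of the i-th projection of K.
-/

open Function

def IsRunaway {X : Type*} [TopologicalSpace X] (f : X → X) : Prop :=
  ∀ K : Set X, IsCompact K → ∃ n : ℕ, 1 ≤ n ∧ f^[n] '' K ∩ K = ∅

section Runaway

variable {X : Type*} [TopologicalSpace X] {f : X → X}

theorem IsRunaway.not_isFixedPt (hf : IsRunaway f) (x : X) : ¬IsFixedPt f x := by
  intro hx
  obtain ⟨n, -, hn⟩ := hf {x} isCompact_singleton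
  have hmem : x ∈ f^[n] '' {x} ∩ {x} := ⟨⟨x, rfl, hx.iterate n⟩, rfl⟩
  rwa [hn] at hmem

theorem isRunaway_of_semiconj_add {E : Type*} [NormedAddCommGroup E] [NormedSpace ℝ E]
    {g : X → E} (hg : Continuous g) {v : E} (hv : v ≠ 0) (hfg : Semiconj g f (· + v)) :
    IsRunaway f := by
  intro K hK
  obtain ⟨R, hR⟩ := hK.exists_bound_of_continuousOn hg.continuousOn
  obtain ⟨n, hn⟩ := exists_nat_gt (2 * R / ‖v‖)
  have hv' : 0 < ‖v‖ := norm_pos_iff.mpr hv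
  refine ⟨n + 1, Nat.le_add_left 1 n, Set.eq_empty_iff_forall_notMem.mpr ?_⟩
  rintro _ ⟨⟨x, hxK, rfl⟩, hyK⟩
  have hshift : g (f^[n + 1] x) - g x = (n + 1) • v := by
    rw [(hfg.iterate_right (n + 1)).eq, add_right_iterate, add_sub_cancel_left]
  have hbound : ((n + 1 : ℕ) : ℝ) * ‖v‖ ≤ 2 * R :=
    calc ((n + 1 : ℕ) : ℝ) * ‖v‖ = ‖g (f^[n + 1] x) - g x‖ := by
          rw [hshift, RCLike.norm_nsmul ℝ, nsmul_eq_mul]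
      _ ≤ ‖g (f^[n + 1] x)‖ + ‖g x‖ := norm_sub_le _ _
      _ ≤ 2 * R := by linarith [hR _ hyK, hR x hxK]
  rw [div_lt_iff₀ hv'] at hn
  push_cast at hbound
  linarith

end Runaway

section DiagonalAffine

variable {ι 𝕜 : Type*}

theorem exists_isFixedPt_diagonal_affine [Field 𝕜] {l b : ι → 𝕜}
    (h : ∀ i, l i = 1 → b i = 0) : ∃ p : ι → 𝕜, IsFixedPt (fun z i => l i * z i + b i) p := by
  classical
  refine ⟨fun i => if l i = 1 then 0 else b i / (1 - l i), funext fun i => ?_⟩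
  by_cases hi : l i = 1
  · simp [hi, h i hi]
  · have h1 : 1 - l i ≠ 0 := sub_ne_zero.mpr (Ne.symm hi)
    simp only [if_neg hi]
    field_simp
    ring

theorem isRunaway_diagonal_affine_iff [RCLike 𝕜] (l b : ι → 𝕜) :
    IsRunaway (fun z i => l i * z i + b i) ↔ ∃ i, l i = 1 ∧ b i ≠ 0 := by
  constructor
  · intro h
    by_contra! hc
    obtain ⟨p, hp⟩ := exists_isFixedPt_diagonal_affine hc
    exact h.not_isFixedPt p hp
  · rintro ⟨i, hi, hb⟩
    exact isRunaway_of_semiconj_add (continuous_apply i) hb fun z => by simp [hi]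

end DiagonalAffine

theorem stmt_6_general {N : ℕ} (l b : Fin N → ℂ) :
    (∀ K : Set (Fin N → ℂ), IsCompact K → ∃ n : ℕ, 1 ≤ n ∧
        ((fun z : Fin N → ℂ => fun i => l i * z i + b i)^[n] '' K) ∩ K = ∅)
      ↔ ∃ i, l i = 1 ∧ b i ≠ 0 :=
  isRunaway_diagonal_affine_iff l b

/-- The diagonal affine map φ(z)ᵢ = λᵢzᵢ + bᵢ (all λᵢ ≠ 0) is runaway iff some
coordinate is a nontrivial translation. -/
theorem stmt_6 {N : ℕ} (l b : Fin N → ℂ) (hl : ∀ i, l i ≠ 0) :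
    (∀ K : Set (Fin N → ℂ), IsCompact K → ∃ n : ℕ, 1 ≤ n ∧
        ((fun z : Fin N → ℂ => fun i => l i * z i + b i)^[n] '' K) ∩ K = ∅)
      ↔ ∃ i, l i = 1 ∧ b i ≠ 0 :=
  stmt_6_general l b
end

section
/- Let A ∈ ℂ^{N×N} be invertible, v ∈ ℂᴺ nonzero, and φ(z) = Az + b an affine map with fixed point z₀. If lim_{k→∞} k! ∏_{i=0}^{k-1} ‖Aⁱv‖ < +∞ (the sequence is bounded), then the operator C_φ ∘ D_v on H(ℂᴺ) is not hypercyclic. -/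
/-!
Because `z₀` is fixed by `φ`, `Tⁿ f (z₀)` is obtained from `f` near `z₀` by `n` successive
one-variable derivatives along `v, Av, …, Aⁿ⁻¹v`. Applying the Cauchy estimate once per direction,
on the polydisc of radii `ρ / (n ‖Aⁱ v‖)` (which lies in the ball `B(z₀, ρ)`), gives
`|Tⁿ f (z₀)| ρⁿ ≤ nⁿ ∏ ‖Aⁱ v‖ · sup_{B(z₀, ρ)} |f|`. With `ρ = e` and `nⁿ ≤ eⁿ n!` the orbit of
every entire `f` is therefore bounded at `z₀`, so it cannot approximate large constants.
That `D_v` preserves entire functions comes from the Cauchy integral formula for `D_v f` along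
complex lines, differentiated under the integral sign.
-/

open Metric Complex Finset
open scoped Real

variable {E : Type*} [NormedAddCommGroup E] [NormedSpace ℂ E]

theorem Differentiable.comp_add_smul {f : E → ℂ} (hf : Differentiable ℂ f) (x v : E) :
    Differentiable ℂ fun τ : ℂ => f (x + τ • v) :=
  hf.comp ((differentiable_id.smul_const v).const_add x)

theorem norm_fderiv_apply_le_of_forall_norm_le {f : E → ℂ} (hf : Differentiable ℂ f) (x v : E)
    {r M : ℝ} (hr : 0 < r) (hM : ∀ τ : ℂ, ‖τ‖ = r → ‖f (x + τ • v)‖ ≤ M) :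
    ‖fderiv ℂ f x v‖ ≤ M / r := by
  rw [← (hf x).lineDeriv_eq_fderiv]
  exact norm_deriv_le_of_forall_mem_sphere_norm_le hr (hf.comp_add_smul x v).diffContOnCl
    fun τ hτ => hM τ (by simpa using hτ)

theorem fderiv_apply_eq_circleIntegral {f : E → ℂ} (hf : Differentiable ℂ f) (x v : E) :
    fderiv ℂ f x v = (2 * π * I)⁻¹ • ∮ z in C(0, 1), (1 / z ^ 2) • f (x + z • v) := by
  have h := (hf.comp_add_smul x v).differentiableOn.deriv_eq_smul_circleIntegral
    (c := 0) one_pos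
  simp only [sub_zero] at h
  rw [h, ← (hf x).lineDeriv_eq_fderiv, inv_smul_smul₀ (by simp [Real.pi_ne_zero])]
  rfl

theorem norm_fderiv_le_of_forall_norm_le {f : E → ℂ} (hf : Differentiable ℂ f) {c : E}
    {r M : ℝ} (hr : 0 < r) (hM : ∀ y ∈ ball c r, ‖f y‖ ≤ M) : ‖fderiv ℂ f c‖ ≤ (M + M) / r :=
  Complex.norm_fderiv_le_div_of_mapsTo_ball hf.differentiableOn
    (fun y hy => mem_closedBall.2 <| (dist_le_norm_add_norm _ _).trans <|
      add_le_add (hM y hy) (hM c (mem_ball_self hr))) hr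

theorem Differentiable.exists_forall_closedBall_norm_fderiv_le [FiniteDimensional ℂ E]
    {f : E → ℂ} (hf : Differentiable ℂ f) (x₀ : E) (R : ℝ) :
    ∃ B, ∀ y ∈ closedBall x₀ R, ‖fderiv ℂ f y‖ ≤ B := by
  obtain ⟨M, hM⟩ := (isCompact_closedBall x₀ (R + 1)).exists_bound_of_continuousOn
    hf.continuous.continuousOn
  refine ⟨(M + M) / 1, fun y hy => norm_fderiv_le_of_forall_norm_le hf one_pos fun z hz => ?_⟩
  refine hM z (mem_closedBall.2 ((dist_triangle z y x₀).trans ?_))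
  linarith [mem_ball.1 hz, mem_closedBall.1 hy]

theorem differentiable_circleIntegral_smul_comp_add_smul [FiniteDimensional ℂ E] {f : E → ℂ}
    (hf : Differentiable ℂ f) (v : E) {g : ℂ → ℂ} (hg : ContinuousOn g (sphere 0 1)) :
    Differentiable ℂ fun x => ∮ z in C(0, 1), g z • f (x + z • v) := by
  borelize E
  intro x₀
  obtain ⟨B, hB⟩ := hf.exists_forall_closedBall_norm_fderiv_le x₀ (1 + ‖v‖)
  obtain ⟨G, hG⟩ := (isCompact_sphere (0 : ℂ) 1).exists_bound_of_continuousOn hg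
  set γ := circleMap 0 1
  have hγ : ∀ θ, γ θ ∈ sphere (0 : ℂ) 1 := circleMap_mem_sphere 0 zero_le_one
  have hdγ : ∀ θ, ‖deriv γ θ‖ = 1 := fun θ => by simp [γ]
  have hcγ : Continuous fun θ => deriv γ θ := by
    simp only [γ, deriv_circleMap]
    exact (continuous_circleMap 0 1).mul continuous_const
  have hgγ : Continuous fun θ => g (γ θ) := hg.comp_continuous (continuous_circleMap 0 1) hγ
  have hline : Continuous fun θ => γ θ • v := (continuous_circleMap 0 1).smul continuous_const
  have hF : ∀ x, Continuous fun θ => deriv γ θ • g (γ θ) • f (x + γ θ • v) := fun x =>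
    hcγ.smul (hgγ.smul (hf.continuous.comp (continuous_const.add hline)))
  have hF' : ∀ θ x, HasFDerivAt (fun y => deriv γ θ • g (γ θ) • f (y + γ θ • v))
      (deriv γ θ • g (γ θ) • fderiv ℂ f (x + γ θ • v)) x := fun θ x =>
    ((hasFDerivAt_comp_add_right _ |>.2 (hf _).hasFDerivAt).fun_const_smul _).fun_const_smul _
  have hbound : ∀ θ, ∀ x ∈ ball x₀ 1,
      ‖deriv γ θ • g (γ θ) • fderiv ℂ f (x + γ θ • v)‖ ≤ G * B := by
    intro θ x hx
    have hfderiv : ‖fderiv ℂ f (x + γ θ • v)‖ ≤ B := by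
      refine hB _ (mem_closedBall.2 ((dist_triangle _ x x₀).trans ?_))
      rw [dist_self_add_left, norm_smul, mem_sphere_zero_iff_norm.1 (hγ θ), one_mul]
      linarith [mem_ball.1 hx]
    rw [norm_smul, norm_smul, hdγ, one_mul]
    exact mul_le_mul (hG _ (hγ θ)) hfderiv (norm_nonneg _) ((norm_nonneg _).trans (hG _ (hγ θ)))
  have := intervalIntegral.hasFDerivAt_integral_of_dominated_of_fderiv_le
    (μ := MeasureTheory.volume) (a := 0) (b := 2 * π) (bound := fun _ => G * B)
    (F := fun x θ => deriv γ θ • g (γ θ) • f (x + γ θ • v)) (ball_mem_nhds x₀ one_pos)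
    (Filter.Eventually.of_forall fun x => (hF x).aestronglyMeasurable)
    ((hF x₀).intervalIntegrable _ _)
    (hcγ.aestronglyMeasurable.smul (hgγ.aestronglyMeasurable.smul ((measurable_fderiv ℂ f).comp
      (continuous_const.add hline).measurable).aestronglyMeasurable))
    (Filter.Eventually.of_forall fun θ _ x hx => hbound θ x hx)
    intervalIntegrable_const
    (Filter.Eventually.of_forall fun θ _ x _ => hF' θ x)
  exact this.differentiableAt

theorem Differentiable.fderiv_apply [FiniteDimensional ℂ E] {f : E → ℂ} (hf : Differentiable ℂ f)
    (v : E) : Differentiable ℂ fun x => fderiv ℂ f x v := by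
  have hg : ContinuousOn (fun z : ℂ => 1 / z ^ 2) (sphere 0 1) :=
    continuousOn_const.div (continuousOn_id.pow 2) fun z hz =>
      pow_ne_zero 2 (ne_zero_of_mem_unit_sphere ⟨z, hz⟩)
  simp_rw [fderiv_apply_eq_circleIntegral hf]
  exact (differentiable_circleIntegral_smul_comp_add_smul hf v hg).const_smul (2 * π * I)⁻¹

section CompDeriv

variable (L : E →ₗ[ℂ] E) (b v : E)

/-- The operator `C_φ ∘ D_v` for the affine map `φ w = L w + b`. -/
noncomputable def compDeriv (h : E → ℂ) : E → ℂ := fun w => fderiv ℂ h (L w + b) v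

theorem map_iterate_add_sum_add_smul (n : ℕ) (w : E) (t : ℕ → ℂ) (τ : ℂ) :
    L ((fun z => L z + b)^[n] w + ∑ i ∈ range n, t i • (L ^ i) v) + b + τ • v =
      (fun z => L z + b)^[n + 1] w + ∑ i ∈ range (n + 1), (Nat.casesOn i τ t : ℂ) • (L ^ i) v := by
  rw [Function.iterate_succ_apply', sum_range_succ', map_add, map_sum]
  simp only [map_smul, ← Module.End.mul_apply, ← pow_succ', Nat.rec_zero, pow_zero,
    Module.End.one_apply]
  abel

variable [FiniteDimensional ℂ E]

theorem Differentiable.compDeriv {h : E → ℂ} (hh : Differentiable ℂ h) :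
    Differentiable ℂ (compDeriv L b v h) :=
  (hh.fderiv_apply v).comp <|
    Differentiable.add_const b (LinearMap.toContinuousLinearMap L).differentiable

theorem norm_iterate_compDeriv_mul_prod_le (n : ℕ) {f : E → ℂ} (hf : Differentiable ℂ f) (w : E)
    {r : ℕ → ℝ} (hr : ∀ i, 0 < r i) {M : ℝ}
    (hM : ∀ t : ℕ → ℂ, (∀ i, ‖t i‖ ≤ r i) →
      ‖f ((fun z => L z + b)^[n] w + ∑ i ∈ range n, t i • (L ^ i) v)‖ ≤ M) :
    ‖(compDeriv L b v)^[n] f w‖ * ∏ i ∈ range n, r i ≤ M := by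
  induction n generalizing f r M with
  | zero => simpa using hM 0 fun i => by simpa using (hr i).le
  | succ n ih =>
    rw [Function.iterate_succ_apply, prod_range_succ', ← mul_assoc, ← le_div_iff₀ (hr 0)]
    refine ih (hf.compDeriv L b v) (fun i => hr (i + 1)) fun t ht => ?_
    refine norm_fderiv_apply_le_of_forall_norm_le hf _ v (hr 0) fun τ hτ => ?_
    rw [map_iterate_add_sum_add_smul]
    exact hM _ fun i => by cases i with
      | zero => exact hτ.le
      | succ i => exact ht i

theorem norm_iterate_compDeriv_mul_pow_le {f : E → ℂ} (hf : Differentiable ℂ f) {z₀ : E}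
    (hz₀ : L z₀ + b = z₀) (hv : ∀ i, (L ^ i) v ≠ 0) {ρ M : ℝ} (hρ : 0 < ρ)
    (hM : ∀ z ∈ closedBall z₀ ρ, ‖f z‖ ≤ M) (n : ℕ) :
    ‖(compDeriv L b v)^[n] f z₀‖ * ρ ^ n ≤ M * (n ^ n * ∏ i ∈ range n, ‖(L ^ i) v‖) := by
  rcases n.eq_zero_or_pos with rfl | hn
  · simpa using hM z₀ (mem_closedBall_self hρ.le)
  have hLv : ∀ i, 0 < ‖(L ^ i) v‖ := fun i => norm_pos_iff.2 (hv i)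
  set r : ℕ → ℝ := fun i => ρ / (n * ‖(L ^ i) v‖)
  have hr : ∀ i, 0 < r i := fun i => by have := hLv i; positivity
  have key := norm_iterate_compDeriv_mul_prod_le L b v n hf z₀ hr fun t ht => by
    refine hM _ ?_
    rw [Function.iterate_fixed hz₀, mem_closedBall, dist_self_add_left]
    calc ‖∑ i ∈ range n, t i • (L ^ i) v‖ ≤ ∑ i ∈ range n, r i * ‖(L ^ i) v‖ :=
          norm_sum_le_of_le _ fun i _ => by rw [norm_smul]; gcongr; exact ht i
      _ = ∑ _i ∈ range n, ρ / n := sum_congr rfl fun i _ => by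
          simp only [r]; field_simp [(hLv i).ne']
      _ = ρ := by rw [sum_const, card_range, nsmul_eq_mul]; field_simp
  have hprod : ∏ i ∈ range n, r i = ρ ^ n / (n ^ n * ∏ i ∈ range n, ‖(L ^ i) v‖) := by
    simp only [r, prod_div_distrib, prod_mul_distrib, prod_const, card_range]
  have hden : 0 < (n : ℝ) ^ n * ∏ i ∈ range n, ‖(L ^ i) v‖ :=
    mul_pos (by positivity) (prod_pos fun i _ => hLv i)
  rwa [hprod, mul_div_assoc', div_le_iff₀ hden] at key

theorem norm_iterate_compDeriv_le {f : E → ℂ} (hf : Differentiable ℂ f) {z₀ : E}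
    (hz₀ : L z₀ + b = z₀) (hv : ∀ i, (L ^ i) v ≠ 0) {M : ℝ}
    (hM : ∀ z ∈ closedBall z₀ (Real.exp 1), ‖f z‖ ≤ M) (n : ℕ) :
    ‖(compDeriv L b v)^[n] f z₀‖ ≤ M * (n.factorial * ∏ i ∈ range n, ‖(L ^ i) v‖) := by
  have hM₀ : 0 ≤ M := (norm_nonneg _).trans (hM z₀ (mem_closedBall_self (Real.exp_pos 1).le))
  have hpow : (n : ℝ) ^ n ≤ Real.exp 1 ^ n * n.factorial := by
    rw [← div_le_iff₀ (by positivity), Real.exp_one_pow]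
    exact Real.pow_div_factorial_le_exp _ n.cast_nonneg n
  refine le_of_mul_le_mul_right ?_ (pow_pos (Real.exp_pos 1) n)
  calc ‖(compDeriv L b v)^[n] f z₀‖ * Real.exp 1 ^ n
      ≤ M * (n ^ n * ∏ i ∈ range n, ‖(L ^ i) v‖) :=
        norm_iterate_compDeriv_mul_pow_le L b v hf hz₀ hv (Real.exp_pos 1) hM n
    _ ≤ M * (Real.exp 1 ^ n * n.factorial * ∏ i ∈ range n, ‖(L ^ i) v‖) := by gcongr
    _ = M * (n.factorial * ∏ i ∈ range n, ‖(L ^ i) v‖) * Real.exp 1 ^ n := by ring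

end CompDeriv

theorem stmt_12 {N : ℕ} (A : Matrix (Fin N) (Fin N) ℂ) (hA : IsUnit A.det)
    (v : Fin N → ℂ) (hv : v ≠ 0) (b z₀ : Fin N → ℂ) (hz₀ : A.mulVec z₀ + b = z₀)
    (hbdd : BddAbove (Set.range fun k : ℕ =>
      (k.factorial : ℝ) * ∏ i ∈ Finset.range k, ‖(A ^ i).mulVec v‖)) :
    ¬ ∃ f : (Fin N → ℂ) → ℂ, Differentiable ℂ f ∧
      ∀ g : (Fin N → ℂ) → ℂ, Differentiable ℂ g →
        ∀ K : Set (Fin N → ℂ), IsCompact K → ∀ ε > 0,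
          ∃ n : ℕ, ∀ z ∈ K,
            ‖(fun h : (Fin N → ℂ) → ℂ => fun w => fderiv ℂ h (A.mulVec w + b) v)^[n] f z
              - g z‖ < ε := by
  rintro ⟨f, hf, hdense⟩
  obtain ⟨C, hC⟩ := hbdd
  obtain ⟨M, hM⟩ := (isCompact_closedBall z₀ (Real.exp 1)).exists_bound_of_continuousOn
    hf.continuous.continuousOn
  have hM₀ : 0 ≤ M := (norm_nonneg _).trans (hM z₀ (mem_closedBall_self (Real.exp_pos 1).le))
  have hLv : ∀ i, (A.toLin' ^ i) v = (A ^ i).mulVec v := fun i => by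
    rw [← Matrix.toLin'_pow, Matrix.toLin'_apply]
  have hAv : ∀ i, (A.toLin' ^ i) v ≠ 0 := fun i h => hv <|
    Matrix.mulVec_injective_iff_isUnit.2 ((A.isUnit_iff_isUnit_det.2 hA).pow i) <| by
      rw [← hLv, h, Matrix.mulVec_zero]
  have horbit : ∀ n, ‖(compDeriv A.toLin' b v)^[n] f z₀‖ ≤ M * C := fun n =>
    (norm_iterate_compDeriv_le A.toLin' b v hf hz₀ hAv hM n).trans <|
      mul_le_mul_of_nonneg_left (by simpa only [hLv] using hC ⟨n, rfl⟩) hM₀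
  set c : ℂ := ((|M * C| + 1 : ℝ) : ℂ)
  obtain ⟨n, hn⟩ := hdense (fun _ => c) (differentiable_const c) {z₀} isCompact_singleton 1 one_pos
  have hclose : ‖(compDeriv A.toLin' b v)^[n] f z₀ - c‖ < 1 := hn z₀ rfl
  have hc : ‖c‖ = |M * C| + 1 := by
    rw [Complex.norm_real, Real.norm_of_nonneg (by positivity)]
  have := norm_sub_norm_le c ((compDeriv A.toLin' b v)^[n] f z₀)
  rw [norm_sub_rev, hc] at this
  linarith [horbit n, le_abs_self (M * C)]
end

section
/- Let v ∈ ℂᴺ be nonzero and define μ(z) = ⟨z, v⟩/‖v‖². For an entire function h : ℂᴺ → ℂ and points a ∈ ℂ, define Gg(z) = ∫ from a to μ(z) of g(η(t, z)) dt where η(t,z) = ψ(t v + π(z)) for any holomorphic ψ and linear π with the property that ψ(μ(z)v + π(z)) = χ(z) for a fixed holomorphic map χ. Then the directional derivative satisfies D_v(Gg)(z) = g(χ(z)). In the paper's setting, with Sg(z) = ∫_{μ(z₀)}^{μ(z)} g(φ⁻¹(tv + π̃(z) + π₂(z))) dt, one has D_v(Sg)(z) = g(φ⁻¹(z)), hence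 (C_φ ∘ D_v) ∘ S = Id on H(ℂᴺ). -/
open scoped ComplexInnerProductSpace in
/-- μ(z) = ⟨z,v⟩/‖v‖² (linear in z). -/
noncomputable def muF {N : ℕ} (v z : EuclideanSpace ℂ (Fin N)) : ℂ :=
  (inner ℂ v z : ℂ) / (‖v‖ : ℂ) ^ 2

/-- φ⁻¹(z) = A⁻¹(z - b). -/
noncomputable def phiInv {N : ℕ} (A : Matrix (Fin N) (Fin N) ℂ)
    (b z : EuclideanSpace ℂ (Fin N)) : EuclideanSpace ℂ (Fin N) :=
  Matrix.toEuclideanLin A⁻¹ (z - b)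

/-- Sg(z) = ∫_{μ(z₀)}^{μ(z)} g(φ⁻¹(t v + π̃(z) + π₂(z))) dt, the integral over the complex
segment from μ(z₀) to μ(z) parametrized by t = μ(z₀) + s(μ(z) - μ(z₀)), s ∈ [0,1];
here π̃(z) = π₁(z) - μ(z)v, π₂ = I - π₁, π₁ the orthogonal projection onto M. -/
noncomputable def Sop {N : ℕ} (A : Matrix (Fin N) (Fin N) ℂ)
    (b z₀ v : EuclideanSpace ℂ (Fin N)) (M : Submodule ℂ (EuclideanSpace ℂ (Fin N)))
    (g : EuclideanSpace ℂ (Fin N) → ℂ) (z : EuclideanSpace ℂ (Fin N)) : ℂ :=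
  (muF v z - muF v z₀) * ∫ s in (0:ℝ)..1,
    g (phiInv A b ((muF v z₀ + (s : ℂ) * (muF v z - muF v z₀)) • v
      + (((M.orthogonalProjection z : EuclideanSpace ℂ (Fin N))) - muF v z • v)
      + (z - (M.orthogonalProjection z : EuclideanSpace ℂ (Fin N)))))

/-!
Since `π̃(z) + π₂(z) = z - μ(z) v`, the integrand of `Sg` depends on `z` only through `μ(z)` and
the base point `z - μ(z) v`, which does not move along `v`. Hence `s ↦ Sg(z + s v)` is the
integral of a single entire function `h` of one variable over the segment from `μ(z₀)` to
`μ(z) + s`. By Morera's theorem `h` has a primitive `H`, so this integral is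
`H(μ(z) + s) - H(μ(z₀))`, whose derivative at `s = 0` is `h(μ(z)) = g(φ⁻¹ z)`. The second claim
is the first one at the point `φ(z)`.
-/

section SegmentPrimitive

variable {E : Type*} [NormedAddCommGroup E] [NormedSpace ℂ E]

noncomputable def segmentPrimitive (h : ℂ → E) (a w : ℂ) : E :=
  (w - a) • ∫ t in (0:ℝ)..1, h (a + t * (w - a))

theorem Differentiable.hasDerivAt_segmentPrimitive [CompleteSpace E] {h : ℂ → E}
    (hh : Differentiable ℂ h) (a w : ℂ) :
    HasDerivAt (segmentPrimitive h a) (h w) w := by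
  obtain ⟨H, hH⟩ := hh.isExactOn_univ
  have hFTC : segmentPrimitive h a = fun w => H w - H a := funext fun w => by
    have := intervalIntegral.integral_unitInterval_deriv_eq_sub (f := H) (z₀ := a) (z₁ := w - a)
      (hh.continuous.comp (by fun_prop)).continuousOn (fun t _ => hH _ trivial)
    simpa [segmentPrimitive, Complex.real_smul] using this
  rw [hFTC]
  exact (hH w trivial).sub_const (H a)

end SegmentPrimitive

open scoped ComplexInnerProductSpace in
theorem muF_add_smul_self {N : ℕ} {v : EuclideanSpace ℂ (Fin N)} (hv : v ≠ 0)
    (z : EuclideanSpace ℂ (Fin N)) (s : ℂ) : muF v (z + s • v) = muF v z + s := by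
  have : (‖v‖ : ℂ) ≠ 0 := by exact_mod_cast norm_ne_zero_iff.mpr hv
  simp only [muF, inner_add_right, inner_smul_right, inner_self_eq_norm_sq_to_K,
    RCLike.ofReal_eq_complex_ofReal]
  field_simp

theorem differentiable_phiInv {N : ℕ} (A : Matrix (Fin N) (Fin N) ℂ)
    (b : EuclideanSpace ℂ (Fin N)) : Differentiable ℂ (phiInv A b) :=
  (Matrix.toEuclideanLin A⁻¹).toContinuousLinearMap.differentiable.comp
    (differentiable_id.sub_const b)

theorem phiInv_toEuclideanLin_add {N : ℕ} {A : Matrix (Fin N) (Fin N) ℂ} (hA : IsUnit A.det)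
    (b z : EuclideanSpace ℂ (Fin N)) : phiInv A b (Matrix.toEuclideanLin A z + b) = z := by
  simp [phiInv, Matrix.toLpLin_apply, Matrix.mulVec_mulVec, Matrix.nonsing_inv_mul A hA]

theorem Sop_eq_segmentPrimitive {N : ℕ} (A : Matrix (Fin N) (Fin N) ℂ)
    (b z₀ v : EuclideanSpace ℂ (Fin N)) (M : Submodule ℂ (EuclideanSpace ℂ (Fin N)))
    (g : EuclideanSpace ℂ (Fin N) → ℂ) (z : EuclideanSpace ℂ (Fin N)) :
    Sop A b z₀ v M g z =
      segmentPrimitive (fun τ : ℂ => g (phiInv A b (τ • v + (z - muF v z • v))))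
        (muF v z₀) (muF v z) := by
  unfold Sop segmentPrimitive
  congr 3 with t
  dsimp only
  congr 2
  abel

theorem Sop_add_smul {N : ℕ} (A : Matrix (Fin N) (Fin N) ℂ) (b z₀ : EuclideanSpace ℂ (Fin N))
    {v : EuclideanSpace ℂ (Fin N)} (hv : v ≠ 0) (M : Submodule ℂ (EuclideanSpace ℂ (Fin N)))
    (g : EuclideanSpace ℂ (Fin N) → ℂ) (z : EuclideanSpace ℂ (Fin N)) (s : ℂ) :
    Sop A b z₀ v M g (z + s • v) =
      segmentPrimitive (fun τ : ℂ => g (phiInv A b (τ • v + (z - muF v z • v))))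
        (muF v z₀) (muF v z + s) := by
  have hbase : z + s • v - muF v (z + s • v) • v = z - muF v z • v := by
    rw [muF_add_smul_self hv, add_smul]; abel
  rw [Sop_eq_segmentPrimitive, hbase, muF_add_smul_self hv]

theorem hasDerivAt_Sop_add_smul {N : ℕ} {A : Matrix (Fin N) (Fin N) ℂ}
    (b z₀ : EuclideanSpace ℂ (Fin N)) {v : EuclideanSpace ℂ (Fin N)} (hv : v ≠ 0)
    (M : Submodule ℂ (EuclideanSpace ℂ (Fin N))) {g : EuclideanSpace ℂ (Fin N) → ℂ}
    (hg : Differentiable ℂ g) (z : EuclideanSpace ℂ (Fin N)) :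
    HasDerivAt (fun s : ℂ => Sop A b z₀ v M g (z + s • v)) (g (phiInv A b z)) 0 := by
  set h := fun τ : ℂ => g (phiInv A b (τ • v + (z - muF v z • v)))
  have hh : Differentiable ℂ h :=
    hg.comp ((differentiable_phiInv A b).comp ((differentiable_id.smul_const v).add_const _))
  have hz : h (muF v z) = g (phiInv A b z) := by simp only [h, add_sub_cancel]
  rw [funext (Sop_add_smul A b z₀ hv M g z), ← hz]
  simpa using (hh.hasDerivAt_segmentPrimitive (muF v z₀) (muF v z + 0)).comp_const_add _ 0

theorem stmt_15_general {N : ℕ} (A : Matrix (Fin N) (Fin N) ℂ) (hA : IsUnit A.det)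
    (b z₀ v : EuclideanSpace ℂ (Fin N)) (hv : v ≠ 0)
    (M : Submodule ℂ (EuclideanSpace ℂ (Fin N)))
    (g : EuclideanSpace ℂ (Fin N) → ℂ) (hg : Differentiable ℂ g) :
    (∀ z, Filter.Tendsto
        (fun s : ℂ => (Sop A b z₀ v M g (z + s • v) - Sop A b z₀ v M g z) / s)
        (nhdsWithin 0 {(0 : ℂ)}ᶜ) (nhds (g (phiInv A b z)))) ∧
    (∀ z, Filter.Tendsto
        (fun s : ℂ =>
          (Sop A b z₀ v M g ((Matrix.toEuclideanLin A z + b) + s • v)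
            - Sop A b z₀ v M g (Matrix.toEuclideanLin A z + b)) / s)
        (nhdsWithin 0 {(0 : ℂ)}ᶜ) (nhds (g z))) := by
  have hDv : ∀ z, Filter.Tendsto
      (fun s : ℂ => (Sop A b z₀ v M g (z + s • v) - Sop A b z₀ v M g z) / s)
      (nhdsWithin 0 {(0 : ℂ)}ᶜ) (nhds (g (phiInv A b z))) := fun z => by
    simpa [div_eq_inv_mul] using (hasDerivAt_Sop_add_smul b z₀ hv M hg z).tendsto_slope_zero
  refine ⟨hDv, fun z => ?_⟩
  simpa only [phiInv_toEuclideanLin_add hA] using hDv (Matrix.toEuclideanLin A z + b)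

/-- In the paper's setting, D_v(Sg)(z) = g(φ⁻¹(z)) (directional derivative as a limit of
difference quotients), and hence (C_φ ∘ D_v) ∘ S = Id on H(ℂᴺ). -/
theorem stmt_15 {N : ℕ} (A : Matrix (Fin N) (Fin N) ℂ) (hA : IsUnit A.det)
    (b z₀ v : EuclideanSpace ℂ (Fin N)) (hv : v ≠ 0)
    (M : Submodule ℂ (EuclideanSpace ℂ (Fin N))) (hvM : v ∈ M)
    (hMA : ∀ x ∈ M, Matrix.toEuclideanLin A x ∈ M)
    (hMperpA : ∀ x ∈ Mᗮ, Matrix.toEuclideanLin A x ∈ Mᗮ)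
    (hz₀ : Matrix.toEuclideanLin A z₀ + b = z₀)
    (g : EuclideanSpace ℂ (Fin N) → ℂ) (hg : Differentiable ℂ g) :
    (∀ z, Filter.Tendsto
        (fun s : ℂ => (Sop A b z₀ v M g (z + s • v) - Sop A b z₀ v M g z) / s)
        (nhdsWithin 0 {(0 : ℂ)}ᶜ) (nhds (g (phiInv A b z)))) ∧
    (∀ z, Filter.Tendsto
        (fun s : ℂ =>
          (Sop A b z₀ v M g ((Matrix.toEuclideanLin A z + b) + s • v)
            - Sop A b z₀ v M g (Matrix.toEuclideanLin A z + b)) / s)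
        (nhdsWithin 0 {(0 : ℂ)}ᶜ) (nhds (g z))) :=
  stmt_15_general A hA b z₀ v hv M g hg
end

section
/- Let N ≥ 1, 1 ≤ j ≤ N, and for γ ∈ ℂʲ let e_γ(z) = exp(γ₁z₁ + ... + γⱼzⱼ) viewed as an entire function on ℂᴺ. Then the linear span of the set {e_γ · z^β : γ ∈ ℂʲ, β ∈ ℕᴺ with βᵢ = 0 for i ≤ j} is dense in H(ℂᴺ) with the compact-open topology. -/
open Complex Finset

lemma pow_diff_bound (x y : ℂ) (B : ℝ) (hx : ‖x‖ ≤ B) (hy : ‖y‖ ≤ B) (n : ℕ) :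
    ‖x ^ n - y ^ n‖ ≤ n * (max B 1) ^ n * ‖x - y‖ := by
  have hB0 : (0:ℝ) ≤ B := le_trans (norm_nonneg x) hx
  have hB1 : (1:ℝ) ≤ max B 1 := le_max_right _ _
  have hBm0 : (0:ℝ) ≤ max B 1 := le_trans zero_le_one hB1
  induction n with
  | zero => simp
  | succ n ih =>
    have key : x ^ (n+1) - y ^ (n+1) = x * (x ^ n - y ^ n) + (x - y) * y ^ n := by ring
    rw [key]
    calc ‖x * (x ^ n - y ^ n) + (x - y) * y ^ n‖
        ≤ ‖x * (x ^ n - y ^ n)‖ + ‖(x - y) * y ^ n‖ := norm_add_le _ _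
      _ = ‖x‖ * ‖x ^ n - y ^ n‖ + ‖x - y‖ * ‖y ^ n‖ := by rw [norm_mul, norm_mul]
      _ ≤ (max B 1) * (n * (max B 1) ^ n * ‖x - y‖) + ‖x - y‖ * (max B 1) ^ n := by
          gcongr
          · exact le_trans hx (le_max_left _ _)
          · calc ‖y ^ n‖ = ‖y‖ ^ n := norm_pow _ _
              _ ≤ (max B 1) ^ n := by gcongr; exact le_trans hy (le_max_left _ _)
      _ ≤ (n+1 : ℕ) * (max B 1) ^ (n+1) * ‖x - y‖ := by
          push_cast
          rw [pow_succ]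
          nlinarith [mul_nonneg (mul_nonneg (pow_nonneg hBm0 n) (norm_nonneg (x - y)))
            (sub_nonneg.mpr hB1), Nat.cast_nonneg (α := ℝ) n]

lemma prod_diff_bound {ι : Type*} [DecidableEq ι] (s : Finset ι) (X Y : ι → ℂ) (C d : ℝ)
    (hd : 0 ≤ d) (hC : 1 ≤ C)
    (h1 : ∀ i ∈ s, ‖X i‖ ≤ C) (h2 : ∀ i ∈ s, ‖Y i‖ ≤ C) (h3 : ∀ i ∈ s, ‖X i - Y i‖ ≤ d) :
    ‖∏ i ∈ s, X i - ∏ i ∈ s, Y i‖ ≤ s.card * C ^ s.card * d := by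
  have hC0 : (0:ℝ) ≤ C := le_trans zero_le_one hC
  induction s using Finset.induction with
  | empty => simp [hd]
  | @insert a s ha ih =>
    have h1' := fun i hi => h1 i (mem_insert_of_mem hi)
    have h2' := fun i hi => h2 i (mem_insert_of_mem hi)
    have h3' := fun i hi => h3 i (mem_insert_of_mem hi)
    have ihs := ih h1' h2' h3'
    rw [Finset.prod_insert ha, Finset.prod_insert ha, Finset.card_insert_of_notMem ha]
    have key : X a * ∏ i ∈ s, X i - Y a * ∏ i ∈ s, Y i
        = X a * (∏ i ∈ s, X i - ∏ i ∈ s, Y i) + (X a - Y a) * ∏ i ∈ s, Y i := by ring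
    rw [key]
    have hXa : ‖X a‖ ≤ C := h1 a (mem_insert_self a s)
    have hprodY : ‖∏ i ∈ s, Y i‖ ≤ C ^ s.card := by
      rw [norm_prod]
      calc ∏ i ∈ s, ‖Y i‖ ≤ ∏ i ∈ s, C := Finset.prod_le_prod (fun i _ => norm_nonneg _) h2'
        _ = C ^ s.card := by rw [Finset.prod_const]
    calc ‖X a * (∏ i ∈ s, X i - ∏ i ∈ s, Y i) + (X a - Y a) * ∏ i ∈ s, Y i‖
        ≤ ‖X a‖ * ‖∏ i ∈ s, X i - ∏ i ∈ s, Y i‖ + ‖X a - Y a‖ * ‖∏ i ∈ s, Y i‖ := by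
          refine le_trans (norm_add_le _ _) ?_
          rw [norm_mul, norm_mul]
      _ ≤ C * (s.card * C ^ s.card * d) + d * C ^ s.card := by
          gcongr
          exact h3 a (mem_insert_self a s)
      _ ≤ (↑(s.card + 1)) * C ^ (s.card + 1) * d := by
          push_cast
          rw [pow_succ]
          nlinarith [mul_nonneg (mul_nonneg (pow_nonneg hC0 s.card) hd) (sub_nonneg.mpr hC),
            Nat.cast_nonneg (α := ℝ) s.card]

lemma span_mul_mem {α : Type*} {S : Set (α → ℂ)} (hS : ∀ a ∈ S, ∀ b ∈ S, a * b ∈ S)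
    {a b : α → ℂ} (ha : a ∈ Submodule.span ℂ S) (hb : b ∈ Submodule.span ℂ S) :
    a * b ∈ Submodule.span ℂ S := by
  induction ha using Submodule.span_induction with
  | mem x hx =>
    induction hb using Submodule.span_induction with
    | mem y hy => exact Submodule.subset_span (hS x hx y hy)
    | zero => simpa using Submodule.zero_mem _
    | add y z _ _ hy hz => rw [mul_add]; exact Submodule.add_mem _ hy hz
    | smul c y _ hy => rw [mul_smul_comm]; exact Submodule.smul_mem _ _ hy
  | zero => simpa using Submodule.zero_mem _
  | add x y _ _ hx hy => rw [add_mul]; exact Submodule.add_mem _ hx hy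
  | smul c x _ hx => rw [smul_mul_assoc]; exact Submodule.smul_mem _ _ hx

local notation "π" => Real.pi

lemma root_sum (q : ℕ) (hq : 0 < q) (m nn : ℕ) :
    ∑ k ∈ Finset.range q,
        ((Complex.exp (2*π*I/q))^k)^nn * (((Complex.exp (2*π*I/q))^k)^m)⁻¹
      = if (q:ℤ) ∣ (nn:ℤ) - (m:ℤ) then (q:ℂ) else 0 := by
  set ω : ℂ := Complex.exp (2*π*I/q) with hω
  have hq0 : (q:ℂ) ≠ 0 := Nat.cast_ne_zero.mpr hq.ne'
  have hω0 : ω ≠ 0 := Complex.exp_ne_zero _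
  have hωq : ω ^ q = 1 := by
    rw [hω, ← Complex.exp_nat_mul]
    rw [show (q:ℂ) * (2*π*I/q) = 2*π*I by field_simp]
    exact Complex.exp_two_pi_mul_I
  have hterm : ∀ k, (ω^k)^nn * ((ω^k)^m)⁻¹ = (ω^nn * (ω^m)⁻¹)^k := by
    intro k
    simp only [mul_pow, ← pow_mul, inv_pow, Nat.mul_comm]
  set ξ : ℂ := ω^nn * (ω^m)⁻¹ with hξ
  have hξz : ξ = ω ^ ((nn:ℤ) - (m:ℤ)) := by
    rw [zpow_sub₀ hω0, zpow_natCast, zpow_natCast, div_eq_mul_inv]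
  have hξq : ξ ^ q = 1 := by
    rw [hξz, ← zpow_natCast (ω ^ ((nn:ℤ) - (m:ℤ))) q, ← zpow_mul, mul_comm, zpow_mul,
      zpow_natCast, hωq, one_zpow]
  have hξiff : ξ = 1 ↔ (q:ℤ) ∣ (nn:ℤ) - (m:ℤ) := by
    rw [hξz]
    constructor
    · intro h
      have h2 : Complex.exp ((((nn:ℤ) - m : ℤ) : ℂ) * (2*π*I/q)) = 1 := by
        rw [Complex.exp_int_mul, ← hω, h]
      rw [Complex.exp_eq_one_iff] at h2
      obtain ⟨k, hk⟩ := h2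
      refine ⟨k, ?_⟩
      have hC : (((nn:ℤ) - m : ℤ) : ℂ) * (2*π*I) = ((k:ℂ) * q) * (2*π*I) := by
        have hq' : ((((nn:ℤ) - m : ℤ)) : ℂ) * (2*π*I) = (((nn:ℤ) - m : ℤ) : ℂ) * (2*π*I/q) * q := by
          field_simp
        rw [hq', hk]; ring
      have h3 := mul_right_cancel₀ two_pi_I_ne_zero hC
      have hC2 : ((nn:ℤ) - m) = q * k := by
        exact_mod_cast h3.trans (by push_cast; ring : ((k:ℂ) * q) = (((q * k : ℤ)) : ℂ))
      exact hC2
    · rintro ⟨l, hl⟩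
      rw [hl, zpow_mul, zpow_natCast, hωq, one_zpow]
  by_cases hdvd : (q:ℤ) ∣ (nn:ℤ) - (m:ℤ)
  · simp only [hdvd, if_true]
    have hx1 : ξ = 1 := hξiff.mpr hdvd
    calc ∑ k ∈ Finset.range q, (ω^k)^nn * ((ω^k)^m)⁻¹ = ∑ k ∈ Finset.range q, ξ^k :=
          Finset.sum_congr rfl fun k _ => hterm k
      _ = (q:ℂ) := by simp [hx1]
  · simp only [hdvd, if_false]
    have hξ1 : ξ ≠ 1 := fun h => hdvd (hξiff.mp h)
    calc ∑ k ∈ Finset.range q, (ω^k)^nn * ((ω^k)^m)⁻¹ = ∑ k ∈ Finset.range q, ξ^k :=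
          Finset.sum_congr rfl fun k _ => hterm k
      _ = (ξ^q - 1)/(ξ - 1) := geom_sum_eq hξ1 q
      _ = 0 := by rw [hξq]; simp

def monSet (n : ℕ) : Set ((Fin n → ℂ) → ℂ) :=
  {F | ∃ β : Fin n → ℕ, F = fun z => ∏ i, z i ^ β i}

lemma monSet_mul (n : ℕ) : ∀ a ∈ monSet n, ∀ b ∈ monSet n, a * b ∈ monSet n := by
  rintro a ⟨α, rfl⟩ b ⟨β, rfl⟩
  refine ⟨α + β, funext fun z => ?_⟩
  simp only [Pi.mul_apply, Pi.add_apply, pow_add, ← Finset.prod_mul_distrib]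

lemma phi_mem {n : ℕ} {p : (Fin n → ℂ) → ℂ} (hp : p ∈ Submodule.span ℂ (monSet n)) (m : ℕ) :
    (fun z : Fin (n+1) → ℂ => p (Fin.init z) * (z (Fin.last n)) ^ m)
      ∈ Submodule.span ℂ (monSet (n+1)) := by
  have hL : ∃ L : ((Fin n → ℂ) → ℂ) →ₗ[ℂ] ((Fin (n+1) → ℂ) → ℂ),
      ∀ q, L q = fun z => q (Fin.init z) := by
    refine ⟨{ toFun := fun q => fun z => q (Fin.init z), map_add' := ?_, map_smul' := ?_ }, fun q => rfl⟩
    · intro q q'; rfl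
    · intro c q; rfl
  obtain ⟨L, hLdef⟩ := hL
  have hLp : L p ∈ Submodule.span ℂ (monSet (n+1)) := by
    have h1 : L p ∈ Submodule.map L (Submodule.span ℂ (monSet n)) :=
      Submodule.mem_map_of_mem hp
    rw [Submodule.map_span] at h1
    refine Submodule.span_mono ?_ h1
    rintro F ⟨G, ⟨β, rfl⟩, rfl⟩
    refine ⟨Fin.snoc β 0, ?_⟩
    rw [hLdef]
    funext z
    rw [Fin.prod_univ_castSucc]
    simp [Fin.init]
  have hmono : (fun z : Fin (n+1) → ℂ => (z (Fin.last n)) ^ m)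
      ∈ Submodule.span ℂ (monSet (n+1)) := by
    refine Submodule.subset_span ⟨Fin.snoc 0 m, funext fun z => ?_⟩
    rw [Fin.prod_univ_castSucc]
    simp
  have := span_mul_mem (monSet_mul (n+1)) hLp hmono
  convert this using 1
  funext z
  simp [hLdef]

open Filter in
lemma poly_approx : ∀ (n : ℕ) (f : (Fin n → ℂ) → ℂ), Differentiable ℂ f → ∀ (R ε : ℝ), 0 < ε →
    ∃ g ∈ Submodule.span ℂ (monSet n), ∀ z, (∀ i, ‖z i‖ ≤ R) → ‖f z - g z‖ ≤ ε := by
  intro n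
  induction n with
  | zero =>
    intro f hf R ε hε
    refine ⟨(f fun i => i.elim0) • (fun _ => (1:ℂ)), ?_, ?_⟩
    · exact Submodule.smul_mem _ _ (Submodule.subset_span ⟨0, by funext z; simp⟩)
    · intro z _
      have hzz : z = fun i => i.elim0 := by funext i; exact i.elim0
      rw [hzz]
      simp only [Pi.smul_apply, smul_eq_mul, mul_one, sub_self, norm_zero]
      linarith
  | succ n IH =>
    intro f hf R ε hε
    rcases lt_or_ge R 0 with hRneg | hR
    · exact ⟨0, Submodule.zero_mem _,
        fun z hz => absurd ((norm_nonneg (z 0)).trans (hz 0)) (not_le.mpr hRneg)⟩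
    set r : ℝ := R + 2 with hrdef
    set ρ : ℝ := R + 1 with hρdef
    have hr : (0:ℝ) < r := by rw [hrdef]; linarith
    have hρ : (0:ℝ) < ρ := by rw [hρdef]; linarith
    have hρ1 : (1:ℝ) ≤ ρ := by rw [hρdef]; linarith
    have hρr : ρ < r := by rw [hρdef, hrdef]; linarith
    -- differentiability of slices
    have hFt : ∀ w : Fin n → ℂ, Differentiable ℂ (fun t : ℂ => f (Fin.snoc w t)) := by
      intro w
      apply hf.comp
      rw [differentiable_pi]
      intro i
      refine Fin.lastCases ?_ ?_ i
      · simp only [Fin.snoc_last]; exact differentiable_id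
      · intro i'; simp only [Fin.snoc_castSucc]; exact differentiable_const _
    have hFw : ∀ ζ : ℂ, Differentiable ℂ (fun w : Fin n → ℂ => f (Fin.snoc w ζ)) := by
      intro ζ
      apply hf.comp
      rw [differentiable_pi]
      intro i
      refine Fin.lastCases ?_ ?_ i
      · simp only [Fin.snoc_last]; exact differentiable_const _
      · intro i'
        simp only [Fin.snoc_castSucc]
        exact (ContinuousLinearMap.proj i' : (Fin n → ℂ) →L[ℂ] ℂ).differentiable
    set a : ℕ → (Fin n → ℂ) → ℂ :=
      fun m w => cauchyPowerSeries (fun t => f (Fin.snoc w t)) 0 r m (fun _ => 1) with hadef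
    have hrnn : (0 : NNReal) < ⟨r, hr.le⟩ := hr
    have hball : ∀ w, HasFPowerSeriesOnBall (fun t => f (Fin.snoc w t))
        (cauchyPowerSeries (fun t => f (Fin.snoc w t)) 0 r) 0 ⊤ := fun w =>
      (hFt w).hasFPowerSeriesOnBall 0 (R := ⟨r, hr.le⟩) hrnn
    have hsum : ∀ (w : Fin n → ℂ) (t : ℂ),
        HasSum (fun m => t ^ m • a m w) (f (Fin.snoc w t)) := by
      intro w t
      have h := (hball w).hasSum (y := t) (by rw [EMetric.mem_ball]; exact edist_lt_top t 0)
      simp only [zero_add] at h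
      have he : (fun m => t ^ m • a m w)
          = fun m => (cauchyPowerSeries (fun t => f (Fin.snoc w t)) 0 r m fun _ => t) := by
        funext m
        have h2 := (cauchyPowerSeries (fun t => f (Fin.snoc w t)) 0 r m).map_smul_univ
          (fun _ => t) (fun _ => (1:ℂ))
        simp only [smul_eq_mul, mul_one, Finset.prod_const, Finset.card_univ,
          Fintype.card_fin] at h2
        rw [h2, smul_eq_mul]
      rw [he]
      exact h
    obtain ⟨M, hM0, hMb⟩ : ∃ M : ℝ, 0 ≤ M ∧
        ∀ z : Fin (n+1) → ℂ, (∀ i, ‖z i‖ ≤ r) → ‖f z‖ ≤ M := by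
      have hcomp : IsCompact {z : Fin (n+1) → ℂ | ∀ i, ‖z i‖ ≤ r} := by
        have hset : {z : Fin (n+1) → ℂ | ∀ i, ‖z i‖ ≤ r}
            = Set.pi Set.univ (fun _ => Metric.closedBall (0:ℂ) r) := by
          ext z
          simp [Set.mem_pi, Metric.mem_closedBall, dist_zero_right]
        rw [hset]
        exact isCompact_univ_pi fun i => isCompact_closedBall 0 r
      obtain ⟨C, hC⟩ := hcomp.exists_bound_of_continuousOn hf.continuous.continuousOn
      exact ⟨max C 0, le_max_right _ _, fun z hz => (hC z hz).trans (le_max_left _ _)⟩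
    have ha_bound : ∀ (m : ℕ) (w : Fin n → ℂ), (∀ i, ‖w i‖ ≤ R) → ‖a m w‖ ≤ M / r ^ m := by
      intro m w hw
      have h1 : ‖a m w‖ ≤ ‖cauchyPowerSeries (fun t => f (Fin.snoc w t)) 0 r m‖ := by
        have h2 := (cauchyPowerSeries (fun t => f (Fin.snoc w t)) 0 r m).le_opNorm
          (fun _ => (1:ℂ))
        simp only [norm_one, Finset.prod_const_one, mul_one] at h2
        exact h2
      have h3 := norm_cauchyPowerSeries_le (fun t => f (Fin.snoc w t)) 0 r m
      have h5 : ∀ θ ∈ Set.Icc (0:ℝ) (2*Real.pi), ‖f (Fin.snoc w (circleMap 0 r θ))‖ ≤ M := by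
        intro θ _
        apply hMb
        intro i
        refine Fin.lastCases ?_ ?_ i
        · rw [Fin.snoc_last]
          have : ‖circleMap 0 r θ‖ = |r| := norm_circleMap_zero r θ
          rw [this,
            abs_of_pos hr]
        · intro i'; rw [Fin.snoc_castSucc]; exact (hw i').trans (by rw [hrdef]; linarith)
      have h4 : (∫ θ : ℝ in (0)..2*Real.pi, ‖f (Fin.snoc w (circleMap 0 r θ))‖)
          ≤ 2*Real.pi * M := by
        calc (∫ θ : ℝ in (0)..2*Real.pi, ‖f (Fin.snoc w (circleMap 0 r θ))‖)
            ≤ ∫ _ : ℝ in (0)..2*Real.pi, M := by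
              apply intervalIntegral.integral_mono_on Real.two_pi_pos.le _ _ h5
              · exact (((hFt w).continuous.comp (continuous_circleMap 0 r)).norm).intervalIntegrable _ _
              · exact intervalIntegrable_const
          _ = 2*Real.pi * M := by rw [intervalIntegral.integral_const, smul_eq_mul]; ring
      calc ‖a m w‖
          ≤ ((2*Real.pi)⁻¹ * ∫ θ : ℝ in (0)..2*Real.pi,
              ‖f (Fin.snoc w (circleMap 0 r θ))‖) * |r|⁻¹ ^ m := h1.trans h3
        _ ≤ ((2*Real.pi)⁻¹ * (2*Real.pi*M)) * |r|⁻¹ ^ m :=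
            mul_le_mul_of_nonneg_right
              (mul_le_mul_of_nonneg_left h4 (by positivity)) (by positivity)
        _ = M / r ^ m := by
            rw [abs_of_pos hr, inv_pow, ← div_eq_mul_inv]
            congr 1
            field_simp
    set κ : ℝ := R / r with hκdef
    have hκ0 : 0 ≤ κ := div_nonneg hR hr.le
    have hκ1 : κ < 1 := (div_lt_one hr).mpr (by rw [hrdef]; linarith)
    set κ₂ : ℝ := ρ / r with hκ₂def
    have hκ₂0 : 0 ≤ κ₂ := div_nonneg hρ.le hr.le
    have hκ₂1 : κ₂ < 1 := (div_lt_one hr).mpr hρr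
    obtain ⟨M₀, hM₀⟩ : ∃ M₀ : ℕ, M * κ ^ M₀ * (1 - κ)⁻¹ < ε/3 := by
      have ht : Tendsto (fun m : ℕ => M * κ ^ m * (1-κ)⁻¹) atTop (nhds 0) := by
        have := ((tendsto_pow_atTop_nhds_zero_of_lt_one hκ0 hκ1).const_mul M).mul_const (1-κ)⁻¹
        simpa using this
      exact (ht.eventually_lt_const (by linarith)).exists
    obtain ⟨q, hqM₀, hq2⟩ : ∃ q : ℕ, M₀ < q ∧
        (M₀:ℝ) * (R+1)^M₀ * (M * κ₂ ^ q * (1-κ₂)⁻¹) < ε/3 := by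
      have ht : Tendsto (fun q : ℕ => (M₀:ℝ) * (R+1)^M₀ * (M * κ₂ ^ q * (1-κ₂)⁻¹))
          atTop (nhds 0) := by
        have := ((((tendsto_pow_atTop_nhds_zero_of_lt_one hκ₂0 hκ₂1).const_mul M).mul_const
          (1-κ₂)⁻¹).const_mul ((M₀:ℝ) * (R+1)^M₀))
        simpa using this
      exact ((Filter.eventually_gt_atTop M₀).and (ht.eventually_lt_const (by linarith))).exists
    have hq0 : 0 < q := lt_of_le_of_lt (Nat.zero_le M₀) hqM₀
    have hq0' : ((q:ℝ)) ≠ 0 := Nat.cast_ne_zero.mpr hq0.ne'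
    set ω : ℂ := Complex.exp (2*Real.pi*Complex.I/q) with hωdef
    have hωabs : ∀ k : ℕ, ‖ω ^ k‖ = 1 := by
      intro k
      rw [norm_pow, hωdef,
        show (2*(Real.pi:ℂ)*Complex.I/q) = ((2*Real.pi/q : ℝ) : ℂ) * Complex.I by
          push_cast; ring,
        Complex.norm_exp_ofReal_mul_I, one_pow]
    set ζk : ℕ → ℂ := fun k => (ρ:ℂ) * ω ^ k with hζdef
    set δ' : ℝ := ε / (3 * ((M₀:ℝ) * (R+1)^M₀ + 1)) with hδ'def
    have hRp : (0:ℝ) ≤ (M₀:ℝ) * (R+1)^M₀ :=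
      mul_nonneg (Nat.cast_nonneg _) (pow_nonneg (by linarith) _)
    have hδ'pos : 0 < δ' := by
      rw [hδ'def]
      apply div_pos hε
      linarith
    have hIH : ∀ k : ℕ, ∃ p ∈ Submodule.span ℂ (monSet n),
        ∀ w, (∀ i, ‖w i‖ ≤ R) → ‖f (Fin.snoc w (ζk k)) - p w‖ ≤ δ' :=
      fun k => IH _ (hFw (ζk k)) R δ' hδ'pos
    choose p hp1 hp2 using hIH
    set d : ℕ → ℕ → ℂ := fun m k => ((ρ:ℂ)^m)⁻¹ * (q:ℂ)⁻¹ * ((ω^k)^m)⁻¹ with hddef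
    have hdabs : ∀ m k, ‖d m k‖ = (ρ^m)⁻¹ * (q:ℝ)⁻¹ := by
      intro m k
      have h1 : ‖ω‖ = 1 := by simpa using hωabs 1
      rw [hddef]
      simp [norm_mul, norm_inv, norm_pow, h1, Complex.norm_real, abs_of_pos hρ,
        Complex.norm_natCast]
    refine ⟨∑ m ∈ Finset.range M₀, ∑ k ∈ Finset.range q,
        d m k • (fun z : Fin (n+1) → ℂ => p k (Fin.init z) * (z (Fin.last n)) ^ m), ?_, ?_⟩
    · apply Submodule.sum_mem
      intro m _
      apply Submodule.sum_mem
      intro k _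
      exact Submodule.smul_mem _ _ (phi_mem (hp1 k) m)
    intro z hz
    set w : Fin n → ℂ := Fin.init z with hwdef
    set t : ℂ := z (Fin.last n) with htdef
    have hw : ∀ i, ‖w i‖ ≤ R := fun i => hz _
    have ht : ‖t‖ ≤ R := hz _
    have hfz : f z = f (Fin.snoc w t) := by rw [hwdef, htdef, Fin.snoc_init_self]
    set Bt : ℕ → ℂ := fun m => ∑ k ∈ Finset.range q, d m k * p k w with hBtdef
    have hgz : (∑ m ∈ Finset.range M₀, ∑ k ∈ Finset.range q,
        d m k • (fun z : Fin (n+1) → ℂ => p k (Fin.init z) * (z (Fin.last n)) ^ m)) z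
        = ∑ m ∈ Finset.range M₀, t ^ m * Bt m := by
      rw [Finset.sum_apply]
      refine Finset.sum_congr rfl fun m _ => ?_
      rw [Finset.sum_apply, hBtdef, Finset.mul_sum]
      refine Finset.sum_congr rfl fun k _ => ?_
      simp only [Pi.smul_apply, smul_eq_mul]
      ring
    set A : ℕ → ℂ := fun m => ∑ k ∈ Finset.range q, d m k * f (Fin.snoc w (ζk k)) with hAdef
    have hE1 : ‖f (Fin.snoc w t) - ∑ m ∈ Finset.range M₀, t ^ m • a m w‖ ≤ ε/3 := by
      have hs := hsum w t
      have heq := Summable.sum_add_tsum_nat_add (f := fun m => t ^ m • a m w) M₀ hs.summable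
      rw [hs.tsum_eq] at heq
      have hre : f (Fin.snoc w t) - ∑ m ∈ Finset.range M₀, t^m • a m w
          = ∑' i : ℕ, t^(i+M₀) • a (i+M₀) w := by
        rw [← heq]; ring
      rw [hre]
      have hgeo : HasSum (fun i : ℕ => (M * κ^M₀) * κ^i) ((M*κ^M₀) * (1-κ)⁻¹) :=
        (hasSum_geometric_of_lt_one hκ0 hκ1).mul_left _
      refine le_trans (tsum_of_norm_bounded hgeo ?_) ?_
      · intro i
        rw [norm_smul, norm_pow]
        calc ‖t‖^(i+M₀) * ‖a (i+M₀) w‖ ≤ R^(i+M₀) * (M / r^(i+M₀)) := by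
              have h1 : ‖t‖^(i+M₀) ≤ R^(i+M₀) := pow_le_pow_left₀ (norm_nonneg t) ht _
              exact mul_le_mul h1 (ha_bound _ w hw)
                (norm_nonneg _) (pow_nonneg hR _)
          _ = (M * κ^M₀) * κ^i := by
              have hr0 : r ≠ 0 := hr.ne'
              rw [hκdef, div_pow, div_pow]
              field_simp
              ring
      · calc (M*κ^M₀)*(1-κ)⁻¹ = M * κ^M₀ * (1-κ)⁻¹ := by ring
          _ ≤ ε/3 := hM₀.le
    have hE2 : ∀ m, m < M₀ → ‖a m w - A m‖ ≤ M * κ₂^q * (1-κ₂)⁻¹ := by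
      intro m hm
      have hρC0 : ((ρ:ℂ))^m ≠ 0 := pow_ne_zero _ (by exact_mod_cast hρ.ne')
      have hqC0 : ((q:ℂ)) ≠ 0 := Nat.cast_ne_zero.mpr hq0.ne'
      have hcomb : HasSum (fun nn => ∑ k ∈ Finset.range q, d m k * ((ζk k)^nn • a nn w))
          (A m) := by
        rw [hAdef]
        exact hasSum_sum fun k _ => (hsum w (ζk k)).mul_left (d m k)
      set e : ℕ → ℂ :=
        fun nn => if (q:ℤ) ∣ (nn:ℤ) - (m:ℤ) then (ρ:ℂ)^nn * ((ρ:ℂ)^m)⁻¹ else 0 with hedef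
      have hterm2 : ∀ nn k, d m k * (ζk k)^nn
          = ((ρ:ℂ)^nn * ((ρ:ℂ)^m)⁻¹ * (q:ℂ)⁻¹) * ((ω^k)^nn * ((ω^k)^m)⁻¹) := by
        intro nn k
        rw [hddef, hζdef]
        simp only [mul_pow]
        ring
      have hco : ∀ nn, (∑ k ∈ Finset.range q, d m k * ((ζk k)^nn • a nn w))
          = e nn * a nn w := by
        intro nn
        simp only [smul_eq_mul, ← mul_assoc]
        rw [← Finset.sum_mul]
        congr 1
        calc ∑ k ∈ Finset.range q, d m k * (ζk k)^nn
            = ((ρ:ℂ)^nn * ((ρ:ℂ)^m)⁻¹ * (q:ℂ)⁻¹)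
              * ∑ k ∈ Finset.range q, ((ω^k)^nn * ((ω^k)^m)⁻¹) := by
              rw [Finset.mul_sum]
              exact Finset.sum_congr rfl fun k _ => hterm2 nn k
          _ = e nn := by
              rw [hωdef, root_sum q hq0 m nn]
              simp only [hedef]
              by_cases hdvd : (q:ℤ) ∣ (nn:ℤ) - (m:ℤ)
              · rw [if_pos hdvd, if_pos hdvd]
                field_simp
              · rw [if_neg hdvd, if_neg hdvd, mul_zero]
      have hcomb2 : HasSum (fun nn => e nn * a nn w) (A m) := by
        have := funext hco
        rw [← this]
        exact hcomb
      have hem : e m = 1 := by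
        simp only [hedef, sub_self]
        rw [if_pos (dvd_zero _)]
        exact mul_inv_cancel₀ hρC0
      have hsingle : HasSum (fun nn => if nn = m then a m w else 0) (a m w) :=
        hasSum_ite_eq m _
      have hdiff := hcomb2.sub hsingle
      have hAm : ‖A m - a m w‖ ≤ M * κ₂^q * (1-κ₂)⁻¹ := by
        have hb : HasSum (fun nn : ℕ => if nn < q then (0:ℝ) else M * κ₂ ^ nn)
            (M * κ₂^q * (1-κ₂)⁻¹) := by
          have h1 : HasSum (fun i : ℕ => (M * κ₂^q) * κ₂ ^ i) ((M*κ₂^q) * (1-κ₂)⁻¹) :=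
            (hasSum_geometric_of_lt_one hκ₂0 hκ₂1).mul_left _
          have h2 : (fun i : ℕ => (if i + q < q then (0:ℝ) else M * κ₂ ^ (i+q)))
              = fun i => (M * κ₂^q) * κ₂^i := by
            funext i
            rw [if_neg (by omega), pow_add]
            ring
          have h3 := (hasSum_nat_add_iff
            (f := fun nn => if nn < q then (0:ℝ) else M * κ₂ ^ nn) q).mp (h2 ▸ h1)
          have h4 : ∑ i ∈ Finset.range q, (if i < q then (0:ℝ) else M * κ₂ ^ i) = 0 :=
            Finset.sum_eq_zero fun i hi => if_pos (Finset.mem_range.mp hi)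
          rw [h4, add_zero] at h3
          exact h3
        rw [← hdiff.tsum_eq]
        refine tsum_of_norm_bounded hb ?_
        intro nn
        by_cases hnm : nn = m
        · subst hnm
          rw [if_pos rfl, hem, one_mul, sub_self, norm_zero, if_pos (by omega)]
        · rw [if_neg hnm, sub_zero]
          by_cases hdvd : (q:ℤ) ∣ (nn:ℤ) - (m:ℤ)
          · have hge : q ≤ nn := by
              rcases lt_trichotomy nn m with hlt | heq | hgt
              · exfalso
                have h2 := Int.le_of_dvd (by omega) ((dvd_neg).mpr hdvd)
                rw [neg_sub] at h2
                omega
              · exact absurd heq hnm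
              · have h2 := Int.le_of_dvd (by omega) hdvd
                omega
            simp only [hedef]
            rw [if_pos hdvd, if_neg (not_lt.mpr hge)]
            rw [norm_mul, norm_mul, norm_inv, norm_pow, norm_pow]
            have hnρ : ‖((ρ:ℝ):ℂ)‖ = ρ := by
              rw [Complex.norm_real, Real.norm_eq_abs, abs_of_pos hρ]
            rw [hnρ]
            have hinv1 : (ρ^m)⁻¹ ≤ 1 := by
              rw [inv_le_one_iff₀]
              right
              exact one_le_pow₀ hρ1
            calc ρ^nn * (ρ^m)⁻¹ * ‖a nn w‖ ≤ ρ^nn * 1 * (M / r^nn) := by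
                  refine mul_le_mul (mul_le_mul le_rfl hinv1 (by positivity) (by positivity))
                    (ha_bound nn w hw) (norm_nonneg _) (by positivity)
              _ = M * κ₂^nn := by
                  have hr0 : r ≠ 0 := hr.ne'
                  rw [hκ₂def, div_pow]
                  field_simp
          · simp only [hedef]
            rw [if_neg hdvd]
            simp only [zero_mul, norm_zero]
            by_cases hlt : nn < q
            · rw [if_pos hlt]
            · rw [if_neg hlt]
              positivity
      calc ‖a m w - A m‖ = ‖A m - a m w‖ := by rw [norm_sub_rev]
        _ ≤ M * κ₂^q * (1-κ₂)⁻¹ := hAm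
    have hE3 : ∀ m, ‖A m - Bt m‖ ≤ δ' := by
      intro m
      rw [hAdef, hBtdef, ← Finset.sum_sub_distrib]
      refine le_trans (norm_sum_le _ _) ?_
      have hterm : ∀ k ∈ Finset.range q,
          ‖d m k * f (Fin.snoc w (ζk k)) - d m k * p k w‖ ≤ (q:ℝ)⁻¹ * δ' := by
        intro k _
        rw [← mul_sub, norm_mul]
        have hinv1 : (ρ^m)⁻¹ ≤ 1 := by
          rw [inv_le_one_iff₀]
          right
          exact one_le_pow₀ hρ1
        calc ‖d m k‖ * ‖f (Fin.snoc w (ζk k)) - p k w‖ ≤ ((ρ^m)⁻¹ * (q:ℝ)⁻¹) * δ' := by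
              refine mul_le_mul (le_of_eq ?_) (hp2 k w hw) (norm_nonneg _) ?_
              · rw [hdabs]
              · positivity
          _ ≤ 1 * (q:ℝ)⁻¹ * δ' := by
              refine mul_le_mul (mul_le_mul hinv1 le_rfl (by positivity) zero_le_one)
                le_rfl hδ'pos.le (by positivity)
          _ = (q:ℝ)⁻¹ * δ' := by ring
      refine le_trans (Finset.sum_le_card_nsmul _ _ _ hterm) ?_
      rw [Finset.card_range, nsmul_eq_mul]
      rw [show (q:ℝ) * ((q:ℝ)⁻¹ * δ') = ((q:ℝ) * (q:ℝ)⁻¹) * δ' by ring,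
        mul_inv_cancel₀ hq0', one_mul]
    rw [hfz, hgz]
    have hsplit : f (Fin.snoc w t) - ∑ m ∈ Finset.range M₀, t^m * Bt m
        = (f (Fin.snoc w t) - ∑ m ∈ Finset.range M₀, t^m • a m w)
          + ∑ m ∈ Finset.range M₀, t^m • (a m w - A m)
          + ∑ m ∈ Finset.range M₀, t^m • (A m - Bt m) := by
      simp only [smul_eq_mul, mul_sub]
      rw [Finset.sum_sub_distrib, Finset.sum_sub_distrib]
      ring
    rw [hsplit]
    have htpow : ∀ m ∈ Finset.range M₀, ‖t‖^m ≤ (R+1)^M₀ := by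
      intro m hm
      calc ‖t‖^m ≤ (R+1)^m := pow_le_pow_left₀ (norm_nonneg t) (by linarith) m
        _ ≤ (R+1)^M₀ := pow_le_pow_right₀ (by linarith) (le_of_lt (Finset.mem_range.mp hm))
    have hb1 : ‖∑ m ∈ Finset.range M₀, t^m • (a m w - A m)‖ ≤ ε/3 := by
      refine le_trans (norm_sum_le _ _) ?_
      have hterm : ∀ m ∈ Finset.range M₀,
          ‖t^m • (a m w - A m)‖ ≤ (R+1)^M₀ * (M * κ₂^q * (1-κ₂)⁻¹) := by
        intro m hm
        rw [norm_smul, norm_pow]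
        exact mul_le_mul (htpow m hm) (hE2 m (Finset.mem_range.mp hm)) (norm_nonneg _)
          (by positivity)
      refine le_trans (Finset.sum_le_card_nsmul _ _ _ hterm) ?_
      rw [Finset.card_range, nsmul_eq_mul]
      calc (M₀:ℝ) * ((R+1)^M₀ * (M * κ₂^q * (1-κ₂)⁻¹))
          = (M₀:ℝ) * (R+1)^M₀ * (M*κ₂^q*(1-κ₂)⁻¹) := by ring
        _ ≤ ε/3 := hq2.le
    have hb2 : ‖∑ m ∈ Finset.range M₀, t^m • (A m - Bt m)‖ ≤ ε/3 := by
      refine le_trans (norm_sum_le _ _) ?_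
      have hterm : ∀ m ∈ Finset.range M₀,
          ‖t^m • (A m - Bt m)‖ ≤ (R+1)^M₀ * δ' := by
        intro m hm
        rw [norm_smul, norm_pow]
        exact mul_le_mul (htpow m hm) (hE3 m) (norm_nonneg _) (by positivity)
      refine le_trans (Finset.sum_le_card_nsmul _ _ _ hterm) ?_
      rw [Finset.card_range, nsmul_eq_mul]
      have hden : (0:ℝ) < 3 * ((M₀:ℝ) * (R+1)^M₀ + 1) := by linarith
      calc (M₀:ℝ) * ((R+1)^M₀ * δ') = ((M₀:ℝ) * (R+1)^M₀) * δ' := by ring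
        _ ≤ ε/3 := by
            rw [hδ'def,
              show (M₀:ℝ) * (R+1)^M₀ * (ε / (3 * ((M₀:ℝ) * (R+1)^M₀ + 1)))
                = ((M₀:ℝ)*(R+1)^M₀) * ε / (3*((M₀:ℝ)*(R+1)^M₀+1)) from by ring,
              div_le_div_iff₀ hden (by norm_num : (0:ℝ) < 3)]
            nlinarith [hε.le, hRp]
    calc ‖(f (Fin.snoc w t) - ∑ m ∈ Finset.range M₀, t^m • a m w)
          + ∑ m ∈ Finset.range M₀, t^m • (a m w - A m)
          + ∑ m ∈ Finset.range M₀, t^m • (A m - Bt m)‖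
        ≤ ‖f (Fin.snoc w t) - ∑ m ∈ Finset.range M₀, t^m • a m w‖
          + ‖∑ m ∈ Finset.range M₀, t^m • (a m w - A m)‖
          + ‖∑ m ∈ Finset.range M₀, t^m • (A m - Bt m)‖ := norm_add₃_le
      _ ≤ ε/3 + ε/3 + ε/3 := by
          refine add_le_add (add_le_add hE1 hb1) hb2
      _ = ε := by ring

def expSet (N j : ℕ) : Set ((Fin N → ℂ) → ℂ) :=
  {F | ∃ (γ : Fin N → ℂ) (β : Fin N → ℕ),
    (∀ i : Fin N, j ≤ (i:ℕ) → γ i = 0) ∧ (∀ i : Fin N, (i:ℕ) < j → β i = 0) ∧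
    F = fun z => Complex.exp (∑ i, γ i * z i) * ∏ i, z i ^ β i}

lemma expSet_one (N j : ℕ) : (1 : (Fin N → ℂ) → ℂ) ∈ expSet N j := by
  refine ⟨0, 0, fun _ _ => rfl, fun _ _ => rfl, ?_⟩
  funext z
  simp

lemma expSet_mul (N j : ℕ) : ∀ a ∈ expSet N j, ∀ b ∈ expSet N j, a * b ∈ expSet N j := by
  rintro a ⟨γ, β, hγ, hβ, rfl⟩ b ⟨γ', β', hγ', hβ', rfl⟩
  refine ⟨γ + γ', β + β', fun i hi => by simp [hγ i hi, hγ' i hi],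
    fun i hi => by simp [hβ i hi, hβ' i hi], ?_⟩
  funext z
  simp only [Pi.mul_apply, Pi.add_apply]
  rw [show ∑ i, (γ i + γ' i) * z i = (∑ i, γ i * z i) + ∑ i, γ' i * z i by
      rw [← Finset.sum_add_distrib]; exact Finset.sum_congr rfl fun i _ => by ring,
    Complex.exp_add,
    show ∏ i, z i ^ (β i + β' i) = (∏ i, z i ^ β i) * ∏ i, z i ^ β' i by
      rw [← Finset.prod_mul_distrib]; exact Finset.prod_congr rfl fun i _ => pow_add _ _ _]
  ring

lemma span_pow_mem {α : Type*} {S : Set (α → ℂ)} (hS : ∀ a ∈ S, ∀ b ∈ S, a * b ∈ S)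
    (h1 : (1 : α → ℂ) ∈ S) {a : α → ℂ} (ha : a ∈ Submodule.span ℂ S) (k : ℕ) :
    a ^ k ∈ Submodule.span ℂ S := by
  induction k with
  | zero => rw [pow_zero]; exact Submodule.subset_span h1
  | succ k ih => rw [pow_succ]; exact span_mul_mem hS ih ha

lemma expSet_exp_mem (N j : ℕ) (i0 : Fin N) (hi0 : (i0:ℕ) < j) (c : ℂ) :
    (fun z : Fin N → ℂ => Complex.exp (c * z i0)) ∈ expSet N j := by
  refine ⟨fun i => if i = i0 then c else 0, 0,
    fun i hi => if_neg (by rintro rfl; omega), fun _ _ => rfl, ?_⟩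
  funext z
  have hsum : ∑ i, (if i = i0 then c else 0) * z i = c * z i0 := by
    rw [Finset.sum_eq_single i0]
    · simp
    · intro i _ hne; simp [hne]
    · intro h; exact absurd (Finset.mem_univ i0) h
  rw [hsum]
  simp

lemma expSet_mono_mem (N j : ℕ) (i0 : Fin N) (hi0 : j ≤ (i0:ℕ)) (m : ℕ) :
    (fun z : Fin N → ℂ => z i0 ^ m) ∈ expSet N j := by
  refine ⟨0, fun i => if i = i0 then m else 0, fun _ _ => rfl,
    fun i hi => if_neg (by rintro rfl; omega), ?_⟩
  funext z
  have hprod : ∏ i, z i ^ (if i = i0 then m else 0) = z i0 ^ m := by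
    rw [Finset.prod_eq_single i0]
    · simp
    · intro i _ hne; simp [hne]
    · intro h; exact absurd (Finset.mem_univ i0) h
  rw [hprod]
  simp

lemma mono_approx (N j : ℕ) (α : Fin N → ℕ) (R δ : ℝ) (hR : 0 ≤ R) (hδ : 0 < δ) :
    ∃ h ∈ Submodule.span ℂ (expSet N j), ∀ z : Fin N → ℂ, (∀ i, ‖z i‖ ≤ R) →
      ‖(∏ i, z i ^ α i) - h z‖ ≤ δ := by
  set B : ℝ := R + 1 with hBdef
  set Bm : ℝ := max B 1 with hBmdef
  have hBm1 : (1:ℝ) ≤ Bm := le_max_right _ _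
  have hBm0 : (0:ℝ) ≤ Bm := by linarith
  set Am : ℕ := ∑ i, α i with hAmdef
  set C : ℝ := Bm ^ Am with hCdef
  have hC1 : (1:ℝ) ≤ C := one_le_pow₀ hBm1
  set K' : ℝ := N * C ^ N * ((Am:ℝ) * Bm ^ Am * R ^ 2) with hK'def
  have hK'0 : 0 ≤ K' := by positivity
  set τ : ℝ := min (1/((R+1)^2)) (δ / (K' + 1)) with hτdef
  have hτpos : 0 < τ := lt_min (by positivity) (by positivity)
  have hτC0 : ((τ:ℝ):ℂ) ≠ 0 := by exact_mod_cast hτpos.ne'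
  have hτR : τ * R ≤ 1 := by
    have h1 : τ ≤ 1/((R+1)^2) := min_le_left _ _
    have h2 : τ * R ≤ (1/((R+1)^2)) * R := mul_le_mul_of_nonneg_right h1 hR
    have h3 : (1/((R+1)^2)) * R ≤ 1 := by
      rw [div_mul_eq_mul_div, div_le_one (by positivity)]
      nlinarith
    linarith
  have hτR2 : τ * R^2 ≤ 1 := by
    have h1 : τ ≤ 1/((R+1)^2) := min_le_left _ _
    have h2 : τ * R^2 ≤ (1/((R+1)^2)) * R^2 := mul_le_mul_of_nonneg_right h1 (by positivity)
    have h3 : (1/((R+1)^2)) * R^2 ≤ 1 := by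
      rw [div_mul_eq_mul_div, div_le_one (by positivity)]
      nlinarith
    linarith
  have hKτ : K' * τ ≤ δ := by
    have h1 : τ ≤ δ / (K' + 1) := min_le_right _ _
    have h2 : K' * τ ≤ K' * (δ / (K' + 1)) := mul_le_mul_of_nonneg_left h1 hK'0
    have h3 : K' * (δ / (K' + 1)) ≤ δ := by
      rw [mul_div_assoc']
      rw [div_le_iff₀ (by positivity)]
      nlinarith
    linarith
  set F : Fin N → ((Fin N → ℂ) → ℂ) :=
    fun i z => (if (i:ℕ) < j then (Complex.exp (↑τ * z i) - 1) / ↑τ else z i) ^ α i with hFdef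
  have hFmem : ∀ i, F i ∈ Submodule.span ℂ (expSet N j) := by
    intro i
    by_cases hij : (i:ℕ) < j
    · have hbase : (fun z : Fin N → ℂ => (Complex.exp (↑τ * z i) - 1) / ↑τ)
          ∈ Submodule.span ℂ (expSet N j) := by
        have heq : (fun z : Fin N → ℂ => (Complex.exp (↑τ * z i) - 1) / ↑τ)
            = ((τ:ℂ))⁻¹ • ((fun z : Fin N → ℂ => Complex.exp (↑τ * z i)) - 1) := by
          funext z
          simp only [Pi.smul_apply, Pi.sub_apply, Pi.one_apply, smul_eq_mul]
          rw [div_eq_mul_inv, mul_comm]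
        rw [heq]
        exact Submodule.smul_mem _ _ (Submodule.sub_mem _
          (Submodule.subset_span (expSet_exp_mem N j i hij ↑τ))
          (Submodule.subset_span (expSet_one N j)))
      have heq2 : F i = (fun z : Fin N → ℂ => (Complex.exp (↑τ * z i) - 1) / ↑τ) ^ (α i) := by
        funext z
        simp only [hFdef, if_pos hij, Pi.pow_apply]
      rw [heq2]
      exact span_pow_mem (expSet_mul N j) (expSet_one N j) hbase (α i)
    · have heq2 : F i = fun z : Fin N → ℂ => z i ^ α i := by
        funext z
        simp only [hFdef, if_neg hij]
      rw [heq2]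
      exact Submodule.subset_span (expSet_mono_mem N j i (not_lt.mp hij) (α i))
  refine ⟨∏ i, F i, Finset.prod_induction F _ (fun a b => span_mul_mem (expSet_mul N j))
    (Submodule.subset_span (expSet_one N j)) (fun i _ => hFmem i), ?_⟩
  intro z hz
  rw [Finset.prod_apply]
  set u : Fin N → ℂ := fun i => if (i:ℕ) < j then (Complex.exp (↑τ * z i) - 1) / ↑τ else z i
    with hudef
  have hFz : ∀ i, F i z = u i ^ α i := fun i => rfl
  have hbase_diff : ∀ i, ‖z i - u i‖ ≤ τ * R^2 := by
    intro i
    by_cases hij : (i:ℕ) < j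
    · have hu : u i = (Complex.exp (↑τ * z i) - 1) / ↑τ := by
        simp only [hudef, if_pos hij]
      have hτnorm : ‖((τ:ℝ):ℂ)‖ = τ := by
        rw [Complex.norm_real, Real.norm_eq_abs, abs_of_pos hτpos]
      have hxabs : ‖(↑τ * z i)‖ ≤ 1 := by
        rw [norm_mul]
        calc ‖(↑τ:ℂ)‖ * ‖z i‖ ≤ τ * R := by
              refine mul_le_mul (le_of_eq hτnorm) (hz i) (norm_nonneg _) hτpos.le
          _ ≤ 1 := hτR
      have h2 := Complex.norm_exp_sub_one_sub_id_le hxabs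
      have heq : z i - u i = -((Complex.exp (↑τ * z i) - 1 - ↑τ * z i) / ↑τ) := by
        rw [hu]
        field_simp
        ring
      rw [heq, norm_neg, norm_div, hτnorm]
      calc ‖Complex.exp (↑τ * z i) - 1 - ↑τ * z i‖ / τ
          ≤ ‖(↑τ * z i)‖ ^ 2 / τ := by
            apply div_le_div_of_nonneg_right h2 hτpos.le
          _ ≤ (τ * R) ^ 2 / τ := by
            apply div_le_div_of_nonneg_right _ hτpos.le
            apply pow_le_pow_left₀ (norm_nonneg _)
            rw [norm_mul]
            refine mul_le_mul (le_of_eq hτnorm) (hz i) (norm_nonneg _) hτpos.le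
          _ = τ * R ^ 2 := by
            field_simp
    · have hu : u i = z i := by simp only [hudef, if_neg hij]
      rw [hu, sub_self, norm_zero]
      positivity
  have hubound : ∀ i, ‖u i‖ ≤ B := by
    intro i
    have h1 : ‖u i‖ ≤ ‖z i‖ + ‖z i - u i‖ := by
      calc ‖u i‖ = ‖z i - (z i - u i)‖ := by ring_nf
        _ ≤ ‖z i‖ + ‖z i - u i‖ := norm_sub_le _ _
    calc ‖u i‖ ≤ R + τ * R^2 := by
          refine h1.trans (add_le_add (hz i) (hbase_diff i))
      _ ≤ B := by rw [hBdef]; linarith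
  have hfac : ∀ i, ‖z i ^ α i - u i ^ α i‖ ≤ (Am:ℝ) * Bm ^ Am * (τ * R^2) := by
    intro i
    have h1 := pow_diff_bound (z i) (u i) B ((hz i).trans (by rw [hBdef]; linarith))
      (hubound i) (α i)
    have hαle : (α i : ℝ) ≤ (Am:ℝ) := by
      exact_mod_cast Finset.single_le_sum (f := fun i => α i) (fun _ _ => Nat.zero_le _)
        (Finset.mem_univ i)
    have hple : (max B 1) ^ (α i) ≤ Bm ^ Am := by
      rw [← hBmdef]
      exact pow_le_pow_right₀ hBm1 (Finset.single_le_sum (f := fun i => α i)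
        (fun _ _ => Nat.zero_le _) (Finset.mem_univ i))
    calc ‖z i ^ α i - u i ^ α i‖ ≤ (α i) * (max B 1) ^ (α i) * ‖z i - u i‖ := h1
      _ ≤ (Am:ℝ) * Bm ^ Am * (τ * R^2) := by
          refine mul_le_mul (mul_le_mul hαle hple (by positivity) (Nat.cast_nonneg _))
            (hbase_diff i) (norm_nonneg _) (by positivity)
  have hprod := prod_diff_bound Finset.univ (fun i => z i ^ α i) (fun i => u i ^ α i)
    C ((Am:ℝ) * Bm ^ Am * (τ * R^2)) (by positivity) hC1
    (fun i _ => by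
      calc ‖z i ^ α i‖ = ‖z i‖ ^ α i := norm_pow _ _
        _ ≤ Bm ^ α i := pow_le_pow_left₀ (norm_nonneg _)
            ((hz i).trans (le_trans (by rw [hBdef]; linarith) (le_max_left B 1))) _
        _ ≤ C := pow_le_pow_right₀ hBm1 (Finset.single_le_sum (f := fun i => α i)
            (fun _ _ => Nat.zero_le _) (Finset.mem_univ i)))
    (fun i _ => by
      calc ‖u i ^ α i‖ = ‖u i‖ ^ α i := norm_pow _ _
        _ ≤ Bm ^ α i := pow_le_pow_left₀ (norm_nonneg _)
            ((hubound i).trans (le_max_left B 1)) _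
        _ ≤ C := pow_le_pow_right₀ hBm1 (Finset.single_le_sum (f := fun i => α i)
            (fun _ _ => Nat.zero_le _) (Finset.mem_univ i)))
    (fun i _ => hfac i)
  rw [Finset.card_univ, Fintype.card_fin] at hprod
  calc ‖(∏ i, z i ^ α i) - ∏ i, F i z‖ = ‖(∏ i, z i ^ α i) - ∏ i, u i ^ α i‖ := by
        rw [show (∏ i, F i z) = ∏ i, u i ^ α i from Finset.prod_congr rfl fun i _ => hFz i]
    _ ≤ (N:ℝ) * C ^ N * ((Am:ℝ) * Bm ^ Am * (τ * R^2)) := hprod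
    _ = K' * τ := by rw [hK'def]; ring
    _ ≤ δ := hKτ


theorem stmt_19 {N : ℕ} (hN : 1 ≤ N) (j : ℕ) (hj1 : 1 ≤ j) (hjN : j ≤ N)
    (f : (Fin N → ℂ) → ℂ) (hf : Differentiable ℂ f)
    (K : Set (Fin N → ℂ)) (hK : IsCompact K) (ε : ℝ) (hε : 0 < ε) :
    ∃ g ∈ Submodule.span ℂ {F : (Fin N → ℂ) → ℂ |
        ∃ (γ : Fin N → ℂ) (β : Fin N → ℕ),
          (∀ i : Fin N, j ≤ (i : ℕ) → γ i = 0) ∧ (∀ i : Fin N, (i : ℕ) < j → β i = 0) ∧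
          F = fun z => Complex.exp (∑ i, γ i * z i) * ∏ i, z i ^ β i},
      ∀ z ∈ K, ‖f z - g z‖ < ε := by
  have hSeq : {F : (Fin N → ℂ) → ℂ |
      ∃ (γ : Fin N → ℂ) (β : Fin N → ℕ),
        (∀ i : Fin N, j ≤ (i : ℕ) → γ i = 0) ∧ (∀ i : Fin N, (i : ℕ) < j → β i = 0) ∧
        F = fun z => Complex.exp (∑ i, γ i * z i) * ∏ i, z i ^ β i} = expSet N j := rfl
  rw [hSeq]
  -- bound K by a polydisk
  obtain ⟨R0, hR0⟩ : ∃ R0, ∀ x ∈ K, ‖x‖ ≤ R0 :=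
    hK.isBounded.exists_norm_le
  set R : ℝ := max R0 0 with hRdef
  have hR : 0 ≤ R := le_max_right _ _
  have hKR : ∀ z ∈ K, ∀ i, ‖z i‖ ≤ R :=
    fun z hz i => (norm_le_pi_norm z i).trans ((hR0 z hz).trans (le_max_left _ _))
  -- polynomial approximation
  obtain ⟨g₁, hg₁span, hg₁⟩ := poly_approx N f hf R (ε/4) (by linarith)
  -- approximate elements of the monomial span by elements of the exponential span
  have hQ : ∀ g ∈ Submodule.span ℂ (monSet N), ∀ δ : ℝ, 0 < δ →
      ∃ h ∈ Submodule.span ℂ (expSet N j), ∀ z : Fin N → ℂ, (∀ i, ‖z i‖ ≤ R) →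
        ‖g z - h z‖ ≤ δ := by
    intro g hg
    induction hg using Submodule.span_induction with
    | mem x hx =>
      obtain ⟨β, rfl⟩ := hx
      intro δ hδ
      obtain ⟨h, hh1, hh2⟩ := mono_approx N j β R δ hR hδ
      exact ⟨h, hh1, fun z hz => hh2 z hz⟩
    | zero =>
      intro δ hδ
      exact ⟨0, Submodule.zero_mem _, fun z _ => by simp; linarith⟩
    | add x y hx hy ihx ihy =>
      intro δ hδ
      obtain ⟨h₁, hh₁, he₁⟩ := ihx (δ/2) (by linarith)
      obtain ⟨h₂, hh₂, he₂⟩ := ihy (δ/2) (by linarith)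
      refine ⟨h₁ + h₂, Submodule.add_mem _ hh₁ hh₂, fun z hz => ?_⟩
      have : (x + y) z - (h₁ + h₂) z = (x z - h₁ z) + (y z - h₂ z) := by
        simp only [Pi.add_apply]; ring
      rw [this]
      calc ‖(x z - h₁ z) + (y z - h₂ z)‖ ≤ ‖x z - h₁ z‖ + ‖y z - h₂ z‖ := norm_add_le _ _
        _ ≤ δ/2 + δ/2 := add_le_add (he₁ z hz) (he₂ z hz)
        _ = δ := by ring
    | smul c x hx ihx =>
      intro δ hδ
      obtain ⟨h₁, hh₁, he₁⟩ := ihx (δ/(‖c‖+1)) (by positivity)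
      refine ⟨c • h₁, Submodule.smul_mem _ _ hh₁, fun z hz => ?_⟩
      have : (c • x) z - (c • h₁) z = c * (x z - h₁ z) := by
        simp only [Pi.smul_apply, smul_eq_mul]; ring
      rw [this, norm_mul]
      calc ‖c‖ * ‖x z - h₁ z‖ ≤ ‖c‖ * (δ/(‖c‖+1)) :=
            mul_le_mul_of_nonneg_left (he₁ z hz) (norm_nonneg c)
        _ ≤ δ := by
            rw [mul_div_assoc']
            rw [div_le_iff₀ (by positivity)]
            nlinarith [norm_nonneg c, hδ.le]
  obtain ⟨h, hhspan, hh⟩ := hQ g₁ hg₁span (ε/4) (by linarith)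
  refine ⟨h, hhspan, fun z hz => ?_⟩
  calc ‖f z - h z‖ = ‖(f z - g₁ z) + (g₁ z - h z)‖ := by ring_nf
    _ ≤ ‖f z - g₁ z‖ + ‖g₁ z - h z‖ := norm_add_le _ _
    _ ≤ ε/4 + ε/4 := add_le_add (hg₁ z (hKR z hz)) (hh z (hKR z hz))
    _ < ε := by linarith
end
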